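/- arXiv:2305.17360 — 6 statements merged into one kernel-verified Lean document; each statement's English description precedes it below -/
import Mathlib

section
/- For r even, the vertex set of the r-th power of a path on 2r vertices v_1,...,v_{2r} admits a partition into r/2+1 parts each inducing a forest, given explicitly by the parts {v_1,v_2,v_{r+2},v_{r+3}}, {v_3,v_4,v_{r+4},v_{r+5}}, ..., {v_{r−1},v_r,v_{2r}}, {v_{r+1}}. -/
/-!
Each part `{v_{2t+1}, v_{2t+2}, v_{r+2t+2}, v_{r+2t+3}}` induces a path in this order: consecutive
vertices are at distance `1, r, 1`, all other pairs at distance more than `r`. Folding the index,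
`v_i ↦ i - 1` for `i ≤ r + 1` and `v_i ↦ i - r` beyond, maps every part injectively and
homomorphically into the Hasse diagram of `ℕ`, which is acyclic: the two cycle-neighbours of the
largest vertex of a cycle would both be its predecessor.
-/

/-- The `r`-th power of a path on `ℓ` vertices: `v_i ~ v_j` iff `0 < |i - j| ≤ r`. -/
def pathPower (r ℓ : ℕ) : SimpleGraph (Fin ℓ) :=
  SimpleGraph.fromRel (fun i j => |(i : ℤ) - (j : ℤ)| ≤ r)

/-- The explicit part assignment (for `r` even), using the 1-based index `i = v + 1`:
vertex `v_{r+1}` goes to the last part (index `r/2`), vertices `v_1,...,v_r` are grouped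
in consecutive pairs `{v_{2j-1}, v_{2j}}` into part `j - 1`, and vertices
`v_{r+2},...,v_{2r}` are grouped in consecutive pairs `{v_{r+2j}, v_{r+2j+1}}` into part
`j - 1`; this realizes the parts `{v_1,v_2,v_{r+2},v_{r+3}}, {v_3,v_4,v_{r+4},v_{r+5}},
..., {v_{r-1},v_r,v_{2r}}, {v_{r+1}}`. -/
def evenPart (r : ℕ) (v : Fin (2 * r)) : ℕ :=
  let i := v.val + 1
  if i = r + 1 then r / 2
  else if i ≤ r then (i - 1) / 2
  else (i - r - 2) / 2

open SimpleGraph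

theorem SimpleGraph.isAcyclic_hasse (α : Type*) [LinearOrder α] : (hasse α).IsAcyclic := by
  classical
  intro v c hc
  obtain ⟨m, hm, hmax⟩ := c.support.toFinset.exists_max_image id ⟨v, by simp⟩
  rw [List.mem_toFinset] at hm
  set d := c.rotate m hm
  have hd : d.IsCycle := hc.rotate hm
  have covBy_of_adj : ∀ i, (hasse α).Adj (d.getVert i) m → d.getVert i ⋖ m := fun i hadj =>
    (hasse_adj.1 hadj).resolve_right fun h => h.lt.not_ge <|
      hmax _ (List.mem_toFinset.2 ((c.mem_support_rotate_iff m hm).1 (d.getVert_mem_support i)))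
  exact hd.snd_ne_penultimate <| (covBy_of_adj 1 (d.adj_snd hd.not_nil).symm).unique_left
    (covBy_of_adj _ (d.adj_penultimate hd.not_nil))

theorem pathPower_adj {r ℓ : ℕ} {u v : Fin ℓ} :
    (pathPower r ℓ).Adj u v ↔ u ≠ v ∧ (u : ℕ) ≤ v + r ∧ (v : ℕ) ≤ u + r := by
  rw [pathPower, fromRel_adj, abs_sub_comm, or_self, abs_sub_le_iff]
  omega

theorem evenPart_lt (r : ℕ) (v : Fin (2 * r)) : evenPart r v < r / 2 + 1 := by
  have := v.isLt
  simp only [evenPart]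
  split_ifs <;> omega

def foldIndex (r : ℕ) (v : Fin (2 * r)) : ℕ := if (v : ℕ) ≤ r then v else v + 1 - r

theorem foldIndex_injOn_part {r : ℕ} {u v : Fin (2 * r)} (hpart : evenPart r u = evenPart r v)
    (hfold : foldIndex r u = foldIndex r v) : u = v := by
  have := u.isLt
  have := v.isLt
  simp only [evenPart, foldIndex] at *
  ext
  split_ifs at * <;> omega

theorem foldIndex_adj_of_adj {r : ℕ} {u v : Fin (2 * r)} (hpart : evenPart r u = evenPart r v)
    (hadj : (pathPower r (2 * r)).Adj u v) :
    foldIndex r u + 1 = foldIndex r v ∨ foldIndex r v + 1 = foldIndex r u := by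
  obtain ⟨hne, hdist⟩ := pathPower_adj.1 hadj
  have := u.isLt
  have := v.isLt
  have := Fin.val_ne_of_ne hne
  simp only [evenPart, foldIndex] at *
  split_ifs at * <;> omega

def partFold (r t : ℕ) : (pathPower r (2 * r)).induce {v | evenPart r v = t} →g hasse ℕ where
  toFun v := foldIndex r v
  map_rel' {u v} hadj := by
    simpa [hasse_adj] using foldIndex_adj_of_adj (u.2.trans v.2.symm) hadj

theorem partFold_injective (r t : ℕ) : Function.Injective (partFold r t) := fun u v h =>
  Subtype.ext (foldIndex_injOn_part (u.2.trans v.2.symm) h)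

theorem stmt2_general (r : ℕ) :
    (∀ v : Fin (2 * r), evenPart r v < r / 2 + 1) ∧
    (∀ t : ℕ, ((pathPower r (2 * r)).induce {v | evenPart r v = t}).IsAcyclic) :=
  ⟨evenPart_lt r, fun t => (isAcyclic_hasse ℕ).comap (partFold r t) (partFold_injective r t)⟩

/-- For `r` even, the explicit partition into `r/2 + 1` parts is an acyclic partition of
the `r`-th power of the path on `2r` vertices: each part induces a forest. -/
theorem stmt2 (r : ℕ) (hr : 2 ≤ r) (hre : Even r) :
    (∀ v : Fin (2 * r), evenPart r v < r / 2 + 1) ∧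
    (∀ t : ℕ, ((pathPower r (2 * r)).induce {v | evenPart r v = t}).IsAcyclic) :=
  stmt2_general r
end

section
/- Let r ≥ 2 and let G be a graph with vertex partition V_1 ∪ V_2 ∪ V_3 such that there are no edges between V_1 and V_3 and the graph induced on V_2 is K_r-free. If V_1 and V_3 are nonempty, then G contains no r-th power of a Hamilton cycle. -/
/-- `G` contains the `r`-th power of a Hamilton cycle: a cyclic ordering of all
vertices in which any two vertices at cyclic distance at most `r` are adjacent. -/
def HasPowHamCycle {V : Type*} [Fintype V] (G : SimpleGraph V) (r : ℕ) : Prop :=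
  ∃ e : ZMod (Fintype.card V) ≃ V, ∀ i : ZMod (Fintype.card V), ∀ d : ℕ,
    1 ≤ d → d ≤ r → d < Fintype.card V → G.Adj (e i) (e (i + (d : ZMod (Fintype.card V))))

private lemma stmt5_aux {V : Type*} [Fintype V] (r N : ℕ) (hr : 2 ≤ r) [NeZero N]
    (G : SimpleGraph V) (V1 V2 V3 : Set V)
    (h13 : Disjoint V1 V3)
    (hcover : V1 ∪ V2 ∪ V3 = Set.univ)
    (hno : ∀ x ∈ V1, ∀ y ∈ V3, ¬ G.Adj x y)
    (hfree : ∀ s : Finset V, ↑s ⊆ V2 → ¬ G.IsNClique r s)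
    (ha' : V1.Nonempty) (hb' : V3.Nonempty)
    (e : ZMod N ≃ V)
    (hpow : ∀ i : ZMod N, ∀ d : ℕ, 1 ≤ d → d ≤ r → d < N → G.Adj (e i) (e (i + (d : ZMod N)))) :
    False := by
  classical
  obtain ⟨a, ha⟩ := ha'
  obtain ⟨b, hb⟩ := hb'
  have hn0 : 0 < N := Nat.pos_of_ne_zero (NeZero.ne N)
  set i := e.symm a with hi
  have castinj : ∀ k₁ k₂ : ℕ, k₁ < N → k₂ < N → (k₁ : ZMod N) = (k₂ : ZMod N) → k₁ = k₂ := by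
    intro k₁ k₂ h₁ h₂ h
    have := congrArg ZMod.val h
    rwa [ZMod.val_cast_of_lt h₁, ZMod.val_cast_of_lt h₂] at this
  have f0 : e (i + ((0 : ℕ) : ZMod N)) ∈ V1 := by simp [hi, ha]
  have hex : ∃ m : ℕ, e (i + (m : ZMod N)) ∈ V3 := by
    refine ⟨(e.symm b - i).val, ?_⟩
    have hv : (((e.symm b - i).val : ℕ) : ZMod N) = e.symm b - i := by
      simp [ZMod.natCast_val, ZMod.cast_id]
    rw [hv]
    simpa using hb
  set m := Nat.find hex with hm
  have hm3 : e (i + (m : ZMod N)) ∈ V3 := Nat.find_spec hex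
  have hmlt : m < N := by
    have h1 : m ≤ (e.symm b - i).val := Nat.find_min' hex (by
      have hv : (((e.symm b - i).val : ℕ) : ZMod N) = e.symm b - i := by
        simp [ZMod.natCast_val, ZMod.cast_id]
      rw [hv]; simpa using hb)
    exact lt_of_le_of_lt h1 (ZMod.val_lt _)
  have hm1 : 1 ≤ m := by
    rcases Nat.eq_zero_or_pos m with h | h
    · exfalso
      rw [h] at hm3
      exact Set.disjoint_left.mp h13 f0 (by simpa using hm3)
    · exact h
  set Q : ℕ → Prop := fun k => e (i + (k : ZMod N)) ∈ V1 with hQ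
  set j := Nat.findGreatest Q (m - 1) with hj
  have f0' : Q 0 := by simpa [hQ] using f0
  have hj1 : e (i + (j : ZMod N)) ∈ V1 := by
    have := Nat.findGreatest_spec (P := Q) (Nat.zero_le (m - 1)) f0'
    simpa [hQ, hj] using this
  have hjle : j ≤ m - 1 := Nat.findGreatest_le _
  have hjm : j < m := by omega
  have hmid : ∀ k, j < k → k < m → e (i + (k : ZMod N)) ∈ V2 := by
    intro k hk1 hk2
    have hnot3 : e (i + (k : ZMod N)) ∉ V3 := Nat.find_min hex hk2
    have hnot1 : e (i + (k : ZMod N)) ∉ V1 := by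
      have := Nat.findGreatest_is_greatest (P := Q) (n := m - 1) (k := k) hk1 (by omega)
      simpa [hQ] using this
    have hmem : e (i + (k : ZMod N)) ∈ V1 ∪ V2 ∪ V3 := by
      rw [hcover]; trivial
    rcases hmem with (h | h) | h
    · exact absurd h hnot1
    · exact h
    · exact absurd h hnot3
  by_cases hcase : m ≤ j + r
  · -- short segment: f j ∈ V1 adjacent to f m ∈ V3
    have hadj := hpow (i + (j : ZMod N)) (m - j) (by omega) (by omega) (by omega)
    have hcast : i + (j : ZMod N) + ((m - j : ℕ) : ZMod N) = i + (m : ZMod N) := by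
      have h5 : ((j : ℕ) : ZMod N) + ((m - j : ℕ) : ZMod N) = (m : ZMod N) := by
        rw [← Nat.cast_add]
        congr 1
        omega
      rw [add_assoc, h5]
    rw [hcast] at hadj
    exact hno _ hj1 _ hm3 hadj
  · -- long segment: r internal vertices form a K_r in V2
    push_neg at hcase
    have hrn : r < N := by omega
    set s : Finset V := (Finset.Icc (j + 1) (j + r)).image
      (fun k : ℕ => e (i + (k : ZMod N))) with hs
    have hsub : ↑s ⊆ V2 := by
      intro x hx
      simp only [hs, Finset.coe_image, Set.mem_image, Finset.mem_coe, Finset.mem_Icc] at hx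
      obtain ⟨k, ⟨hk1, hk2⟩, rfl⟩ := hx
      exact hmid k (by omega) (by omega)
    have hadj2 : ∀ k₁ k₂, j + 1 ≤ k₁ → k₁ < k₂ → k₂ ≤ j + r →
        G.Adj (e (i + (k₁ : ZMod N))) (e (i + (k₂ : ZMod N))) := by
      intro k₁ k₂ hk1 hk12 hk2
      have hadj := hpow (i + (k₁ : ZMod N)) (k₂ - k₁) (by omega) (by omega) (by omega)
      have hcast : i + (k₁ : ZMod N) + ((k₂ - k₁ : ℕ) : ZMod N) = i + (k₂ : ZMod N) := by
        have h5 : ((k₁ : ℕ) : ZMod N) + ((k₂ - k₁ : ℕ) : ZMod N) = (k₂ : ZMod N) := by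
          rw [← Nat.cast_add]; congr 1; omega
        rw [add_assoc, h5]
      rwa [hcast] at hadj
    refine hfree s hsub ?_
    rw [SimpleGraph.isNClique_iff]
    constructor
    · intro x hx y hy hxy
      simp only [hs, Finset.coe_image, Set.mem_image, Finset.mem_coe, Finset.mem_Icc] at hx hy
      obtain ⟨k₁, ⟨hk1a, hk1b⟩, rfl⟩ := hx
      obtain ⟨k₂, ⟨hk2a, hk2b⟩, rfl⟩ := hy
      rcases lt_trichotomy k₁ k₂ with h | h | h
      · exact hadj2 k₁ k₂ hk1a h hk2b
      · exact absurd (by rw [h]) hxy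
      · exact (hadj2 k₂ k₁ hk2a h hk1b).symm
    · rw [hs, Finset.card_image_of_injOn, Nat.card_Icc]
      · omega
      · intro k₁ hk₁ k₂ hk₂ heq
        simp only [Finset.coe_Icc, Set.mem_Icc] at hk₁ hk₂
        have h2 : i + (k₁ : ZMod N) = i + (k₂ : ZMod N) := e.injective heq
        have h3 : (k₁ : ZMod N) = (k₂ : ZMod N) := add_left_cancel h2
        exact castinj k₁ k₂ (by omega) (by omega) h3

/-- If `V = V₁ ∪ V₂ ∪ V₃` with no `V₁`-`V₃` edges, `G[V₂]` is `K_r`-free, and `V₁, V₃`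
are nonempty, then `G` has no `r`-th power of a Hamilton cycle. -/
theorem stmt5 {V : Type*} [Fintype V] (r : ℕ) (hr : 2 ≤ r)
    (G : SimpleGraph V) (V1 V2 V3 : Set V)
    (h12 : Disjoint V1 V2) (h13 : Disjoint V1 V3) (h23 : Disjoint V2 V3)
    (hcover : V1 ∪ V2 ∪ V3 = Set.univ)
    (hno : ∀ x ∈ V1, ∀ y ∈ V3, ¬ G.Adj x y)
    (hfree : ∀ s : Finset V, ↑s ⊆ V2 → ¬ G.IsNClique r s)
    (h1 : V1.Nonempty) (h3 : V3.Nonempty) :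
    ¬ HasPowHamCycle G r := by
  rintro ⟨e, hpow⟩
  haveI : Nonempty V := ⟨h1.choose⟩
  haveI : NeZero (Fintype.card V) := ⟨Fintype.card_pos.ne'⟩
  exact stmt5_aux r (Fintype.card V) hr G V1 V2 V3 h13 hcover hno hfree h1 h3 e hpow
end

section
/- For every μ > 0 and r ∈ ℕ with r ≥ 2, if k is sufficiently large, R is a k-vertex graph with δ(R) ≥ (1 − 1/r + μ)k, and H_1, H_2 are two vertex-disjoint copies of K_r in R, then there exist copies B_1,...,B_ℓ of K_{r+1} in R with ℓ ≤ r², such that V(H_1) ⊆ V(B_1), V(H_2) ⊆ V(B_ℓ), and |V(B_i) ∩ V(B_{i+1})| = r − 1 for every i ∈ [ℓ−1]. -/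
/-!
Every `r` vertices of `R` have at least `rμk` common neighbours, so for large `k` a common
neighbour can be chosen outside any `2r + 1` prescribed vertices.

First walk from `H₁` to `H₂` through copies of `K_r`, each obtained from the previous one by
exchanging a single vertex. The vertices `y` of `H₂` are brought in one at a time, keeping the set
`Q` of those already brought in: a vertex outside `Q` is exchanged for a common neighbour of `y`
and the other vertices, which then joins `Q`, until `y` itself can take the last free place. This
needs at most `r - |Q|` exchanges, hence `ℓ ≤ r + (r - 1) + ⋯ + 1 + 1 ≤ r²` in total.

Then extend every `K_r` of the walk to a `K_{r+1}` by a common neighbour that avoids the two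
adjacent cliques of the walk and the vertex added to the next one; consecutive `K_{r+1}` then
still meet in exactly the `r - 1` vertices shared by the underlying `K_r`.
-/

open Finset SimpleGraph

namespace SimpleGraph

variable {V : Type*}

/-- Equivalently: every `t` vertices have more than `m` common neighbours. -/
def ManyCommonNeighbors (G : SimpleGraph V) (t m : ℕ) : Prop :=
  ∀ T X : Finset V, #T ≤ t → #X ≤ m → ∃ z ∉ X, ∀ x ∈ T, G.Adj x z

/-- Walks in this graph are the chains of `n`-cliques in which consecutive cliques share exactly
`s` vertices. -/
def cliqueOverlapGraph [DecidableEq V] (G : SimpleGraph V) (n s : ℕ) :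
    SimpleGraph (Finset V) where
  Adj A B := A ≠ B ∧ G.IsNClique n A ∧ G.IsNClique n B ∧ #(A ∩ B) = s
  symm := ⟨by
    rintro A B ⟨hne, hA, hB, h⟩
    exact ⟨hne.symm, hB, hA, by rwa [inter_comm]⟩⟩
  loopless := ⟨fun _ h => h.1 rfl⟩

variable {G : SimpleGraph V}

lemma ManyCommonNeighbors.mono {t m t' m' : ℕ} (h : G.ManyCommonNeighbors t m) (ht : t' ≤ t)
    (hm : m' ≤ m) : G.ManyCommonNeighbors t' m' :=
  fun T X hT hX => h T X (hT.trans ht) (hX.trans hm)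

lemma card_le_card_commonNeighbors_add_sum [Fintype V] [DecidableEq V] [DecidableRel G.Adj]
    (T : Finset V) :
    Fintype.card V ≤ #{z | ∀ x ∈ T, G.Adj x z} + ∑ x ∈ T, (Fintype.card V - G.degree x) := by
  set C : Finset V := {z | ∀ x ∈ T, G.Adj x z}
  have hC : #Cᶜ ≤ ∑ x ∈ T, (Fintype.card V - G.degree x) :=
    calc #Cᶜ
        ≤ #(T.biUnion fun x => (G.neighborFinset x)ᶜ) := card_le_card fun z => by simp [C]
      _ ≤ ∑ x ∈ T, #(G.neighborFinset x)ᶜ := card_biUnion_le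
      _ = ∑ x ∈ T, (Fintype.card V - G.degree x) := by simp [card_compl]
  have := card_add_card_compl C
  omega

lemma manyCommonNeighbors_of_minDegree [Fintype V] {r : ℕ} {μ : ℝ} (hr : 0 < r)
    (hdeg : ∀ v, (1 - 1 / (r : ℝ) + μ) * Fintype.card V ≤ (G.neighborSet v).ncard)
    (hlarge : 2 * r + 2 ≤ μ * Fintype.card V) : G.ManyCommonNeighbors r (2 * r + 1) := by
  classical
  intro T X hT hX
  set n := Fintype.card V
  have hnon : ∀ v, ((n - G.degree v : ℕ) : ℝ) ≤ (1 / r - μ) * n := by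
    intro v
    have := hdeg v
    rw [← coe_neighborFinset, Set.ncard_coe_finset, card_neighborFinset_eq_degree] at this
    rw [Nat.cast_sub (G.degree_lt_card_verts v).le]
    linarith
  have hμn : 0 ≤ μ * n := le_trans (by positivity) hlarge
  obtain ⟨v⟩ : Nonempty V := Fintype.card_pos_iff.1 <| Nat.pos_of_ne_zero fun h => by
    simp only [n, h, Nat.cast_zero, mul_zero] at hlarge
    linarith [(Nat.cast_nonneg r : (0 : ℝ) ≤ r)]
  have hsum : ((∑ x ∈ T, (n - G.degree x) : ℕ) : ℝ) ≤ n - r * μ * n :=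
    calc ((∑ x ∈ T, (n - G.degree x) : ℕ) : ℝ)
        ≤ #T * ((1 / r - μ) * n) := by
          simpa [Nat.cast_sum] using sum_le_sum fun x (_ : x ∈ T) => hnon x
      _ ≤ r * ((1 / r - μ) * n) := by gcongr; exact (Nat.cast_nonneg _).trans (hnon v)
      _ = n - r * μ * n := by field_simp
  have hcommon :
      (n : ℝ) ≤ #{z | ∀ x ∈ T, G.Adj x z} + ((∑ x ∈ T, (n - G.degree x) : ℕ) : ℝ) := by
    exact_mod_cast card_le_card_commonNeighbors_add_sum T
  have hXC : (#X : ℝ) < #{z | ∀ x ∈ T, G.Adj x z} := by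
    have hr' : (1 : ℝ) * μ * n ≤ r * μ * n := by
      rw [mul_assoc, mul_assoc]
      exact mul_le_mul_of_nonneg_right (by exact_mod_cast hr) hμn
    have : (#X : ℝ) ≤ 2 * r + 1 := by exact_mod_cast hX
    linarith
  obtain ⟨z, hzC, hzX⟩ := exists_mem_notMem_of_card_lt_card (by exact_mod_cast hXC)
  exact ⟨z, hzX, by simpa using hzC⟩

section Walks

variable [DecidableEq V]

@[simp]
lemma cliqueOverlapGraph_adj {n s : ℕ} {A B : Finset V} :
    (G.cliqueOverlapGraph n s).Adj A B ↔
      A ≠ B ∧ G.IsNClique n A ∧ G.IsNClique n B ∧ #(A ∩ B) = s :=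
  Iff.rfl

variable {n s r : ℕ}

lemma cliqueOverlapGraph_adj_insert_erase {S : Finset V} {x z : V} (hS : G.IsNClique n S)
    (hx : x ∈ S) (hz : z ∉ S) (hadj : ∀ v ∈ S.erase x, G.Adj v z) :
    (G.cliqueOverlapGraph n (n - 1)).Adj S (insert z (S.erase x)) := by
  refine cliqueOverlapGraph_adj.2 ⟨ne_of_mem_of_not_mem' (mem_insert_self z _) hz |>.symm, hS,
    hS.insert_erase (fun w hw => (hadj w (by simpa [and_comm] using hw)).symm) hx, ?_⟩
  rw [inter_insert_of_notMem hz, inter_eq_right.2 (erase_subset _ _), card_erase_of_mem hx,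
    hS.card_eq]

lemma isNClique_getVert {A B : Finset V} (p : (G.cliqueOverlapGraph n s).Walk A B)
    (hA : G.IsNClique n A) (i : ℕ) : G.IsNClique n (p.getVert i) := by
  induction p generalizing i with
  | nil => simpa using hA
  | cons h p ih =>
    cases i with
    | zero => simpa using hA
    | succ i => rw [Walk.getVert_cons_succ]; exact ih (cliqueOverlapGraph_adj.1 h).2.2.1 i

lemma exists_walk_insert (hG : G.ManyCommonNeighbors r 1) {y : V} {T Q : Finset V}
    (hT : G.IsNClique r T) (hQT : Q ⊆ T) (hQr : #Q < r) (hQy : ∀ q ∈ Q, G.Adj q y) :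
    ∃ T', ∃ p : (G.cliqueOverlapGraph r (r - 1)).Walk T T',
      p.length ≤ r - #Q ∧ insert y Q ⊆ T' := by
  obtain ⟨d, hd⟩ : ∃ d, r = #Q + 1 + d := ⟨r - #Q - 1, by omega⟩
  induction d generalizing T Q with
  | zero =>
    by_cases hyT : y ∈ T
    · exact ⟨T, Walk.nil, by simp, insert_subset hyT hQT⟩
    obtain ⟨x, hxT, hxQ⟩ := exists_mem_notMem_of_card_lt_card (hT.card_eq ▸ hQr)
    have hQ : T.erase x = Q := (eq_of_subset_of_card_le (subset_erase.2 ⟨hQT, hxQ⟩)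
      (by rw [card_erase_of_mem hxT, hT.card_eq]; omega)).symm
    have hadj := cliqueOverlapGraph_adj_insert_erase hT hxT hyT (hQ ▸ hQy)
    exact ⟨_, hadj.toWalk, by simp; omega, by rw [hQ]⟩
  | succ d ih =>
    obtain ⟨x, hxT, hxQ⟩ := exists_mem_notMem_of_card_lt_card (hT.card_eq ▸ hQr)
    obtain ⟨z, hzx, hz⟩ := hG (insert y (T.erase x)) {x}
      ((card_insert_le _ _).trans (by rw [card_erase_of_mem hxT, hT.card_eq]; omega)) (by simp)
    have hzT : z ∉ T := fun h =>
      G.loopless.irrefl z (hz z (mem_insert_of_mem (mem_erase.2 ⟨by simpa using hzx, h⟩)))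
    have hadj := cliqueOverlapGraph_adj_insert_erase hT hxT hzT
      fun v hv => hz v (mem_insert_of_mem hv)
    have hQz : #(insert z Q) = #Q + 1 := card_insert_of_notMem fun h => hzT (hQT h)
    obtain ⟨T', p, hp, hT'⟩ := ih (cliqueOverlapGraph_adj.1 hadj).2.2.1
      (insert_subset_insert z (subset_erase.2 ⟨hQT, hxQ⟩)) (by omega)
      (forall_mem_insert _ _ _ |>.2 ⟨(hz y (mem_insert_self _ _)).symm, hQy⟩) (by omega)
    refine ⟨T', Walk.cons hadj p, ?_, ?_⟩
    · simp only [Walk.length_cons]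
      omega
    · exact (insert_subset_insert y (subset_insert z Q)).trans hT'

lemma exists_walk_of_isNClique (hG : G.ManyCommonNeighbors r 1) {S₁ S₂ : Finset V}
    (h₁ : G.IsNClique r S₁) (h₂ : G.IsNClique r S₂) :
    ∃ p : (G.cliqueOverlapGraph r (r - 1)).Walk S₁ S₂,
      p.length ≤ ∑ i ∈ range r, (r - i) := by
  suffices h : ∀ Q ⊆ S₂, ∃ T, ∃ p : (G.cliqueOverlapGraph r (r - 1)).Walk S₁ T,
      p.length ≤ ∑ i ∈ range #Q, (r - i) ∧ Q ⊆ T by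
    obtain ⟨T, p, hp, hT⟩ := h S₂ subset_rfl
    have hT' : G.IsNClique r T := p.getVert_length ▸ isNClique_getVert p h₁ p.length
    obtain rfl : S₂ = T := eq_of_subset_of_card_le hT (by rw [hT'.card_eq, h₂.card_eq])
    exact ⟨p, h₂.card_eq ▸ hp⟩
  intro Q
  induction Q using Finset.induction_on with
  | empty => exact fun _ => ⟨S₁, Walk.nil, by simp, empty_subset _⟩
  | insert y Q hyQ ih =>
    intro hQ
    obtain ⟨T, p, hp, hQT⟩ := ih ((subset_insert _ _).trans hQ)
    have hT : G.IsNClique r T := p.getVert_length ▸ isNClique_getVert p h₁ p.length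
    have hQr : #Q < r := h₂.card_eq ▸ card_lt_card ((ssubset_insert hyQ).trans_le hQ)
    obtain ⟨T', p', hp', hT'⟩ := exists_walk_insert hG hT hQT hQr fun q hq =>
      h₂.isClique (hQ (mem_insert_of_mem hq)) (hQ (mem_insert_self y Q))
        (ne_of_mem_of_not_mem hq hyQ)
    refine ⟨T', p.append p', ?_, hT'⟩
    rw [Walk.length_append, card_insert_of_notMem hyQ, sum_range_succ]
    omega

/-- Avoiding the arbitrary set `X` with the first added vertex is what lets the induction keep
consecutive added vertices distinct and outside the neighbouring cliques. -/
lemma exists_walk_insert_insert (hG : G.ManyCommonNeighbors r (2 * r + 1)) {A B : Finset V}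
    (p : (G.cliqueOverlapGraph r (r - 1)).Walk A B) (hA : G.IsNClique r A) {X : Finset V}
    (hX : #X ≤ r) :
    ∃ w ∉ X, G.IsNClique (r + 1) (insert w A) ∧ ∃ w',
      ∃ q : (G.cliqueOverlapGraph (r + 1) (r - 1)).Walk (insert w A) (insert w' B),
        q.length = p.length := by
  induction p generalizing X with
  | nil =>
    obtain ⟨w, hwX, hw⟩ := hG _ X hA.card_eq.le (by omega)
    exact ⟨w, hwX, hA.insert fun b hb => (hw b hb).symm, w, Walk.nil, rfl⟩
  | @cons A A₁ B h p ih =>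
    obtain ⟨-, -, hA₁, hAA₁⟩ := cliqueOverlapGraph_adj.1 h
    obtain ⟨w₁, hw₁A, hA₁', w', q, hq⟩ := ih hA₁ (X := A) hA.card_eq.le
    have hXA₁ : #(X ∪ insert w₁ A₁) ≤ 2 * r + 1 := by
      have := card_union_le X (insert w₁ A₁)
      have := card_insert_le w₁ A₁
      rw [hA₁.card_eq] at *
      omega
    obtain ⟨w, hwX, hw⟩ := hG A (X ∪ insert w₁ A₁) hA.card_eq.le hXA₁
    rw [mem_union, not_or] at hwX
    have hA' : G.IsNClique (r + 1) (insert w A) := hA.insert fun b hb => (hw b hb).symm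
    have hadj : (G.cliqueOverlapGraph (r + 1) (r - 1)).Adj (insert w A) (insert w₁ A₁) := by
      refine ⟨ne_of_mem_of_not_mem' (mem_insert_self w A) hwX.2, hA', hA₁', ?_⟩
      rw [insert_inter_of_notMem hwX.2, inter_insert_of_notMem hw₁A, hAA₁]
    exact ⟨w, hwX.1, hA', w', Walk.cons hadj q, by simp [hq]⟩

end Walks

end SimpleGraph

lemma sum_range_sub_add_one_le_sq {r : ℕ} (hr : 2 ≤ r) :
    ∑ i ∈ range r, (r - i) + 1 ≤ r ^ 2 := by
  induction r, hr using Nat.le_induction with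
  | base => decide
  | succ r hr ih =>
    simp only [sum_range_succ', Nat.add_sub_add_right, Nat.sub_zero]
    nlinarith

/-- Lemma 6.3: in a `k`-vertex graph `R` with `δ(R) ≥ (1 - 1/r + μ)k` (`k` large), any
two vertex-disjoint copies of `K_r` can be joined by a chain of at most `r²` copies of
`K_{r+1}`, consecutive ones sharing exactly `r - 1` vertices. -/
theorem stmt9 (μ : ℝ) (hμ : 0 < μ) (r : ℕ) (hr : 2 ≤ r) :
    ∃ k₀ : ℕ, ∀ k : ℕ, k₀ ≤ k → ∀ R : SimpleGraph (Fin k),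
      (∀ v : Fin k, (1 - 1 / (r : ℝ) + μ) * k ≤ ((R.neighborSet v).ncard : ℝ)) →
      ∀ S1 S2 : Finset (Fin k), Disjoint S1 S2 →
        R.IsNClique r S1 → R.IsNClique r S2 →
        ∃ ℓ : ℕ, 1 ≤ ℓ ∧ ℓ ≤ r ^ 2 ∧ ∃ B : ℕ → Finset (Fin k),
          (∀ i < ℓ, R.IsNClique (r + 1) (B i)) ∧
          S1 ⊆ B 0 ∧ S2 ⊆ B (ℓ - 1) ∧
          ∀ i, i + 1 < ℓ → (B i ∩ B (i + 1)).card = r - 1 := by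
  refine ⟨⌈(2 * r + 2 : ℝ) / μ⌉₊, fun k hk R hdeg S1 S2 _ h1 h2 => ?_⟩
  have hlarge : (2 * r + 2 : ℝ) ≤ μ * Fintype.card (Fin k) := by
    rw [Fintype.card_fin, ← div_le_iff₀' hμ]
    exact (Nat.le_ceil _).trans (by exact_mod_cast hk)
  have hG := manyCommonNeighbors_of_minDegree (by omega) (by simpa using hdeg) hlarge
  obtain ⟨p, hp⟩ := exists_walk_of_isNClique (hG.mono le_rfl (by omega)) h1 h2
  obtain ⟨w, -, hB₀, w', q, hq⟩ := exists_walk_insert_insert hG p h1 (X := ∅) (by simp)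
  refine ⟨q.length + 1, by omega, ?_, q.getVert, fun i _ => isNClique_getVert q hB₀ i, ?_, ?_,
    fun i hi => (cliqueOverlapGraph_adj.1 (q.adj_getVert_succ (by omega))).2.2.2⟩
  · have := sum_range_sub_add_one_le_sq hr
    omega
  · rw [q.getVert_zero]
    exact subset_insert _ _
  · rw [Nat.add_sub_cancel, q.getVert_length]
    exact subset_insert _ _
end

section
/- For every μ > 0 and r ∈ ℕ with r ≥ 2, if k is sufficiently large, R is a k-vertex graph with δ(R) ≥ (1 − 1/r + μ)k, and x, y are two disjoint r-tuples of vertices each spanning a copy of K_r, then there exists a good walk Q = (S_1,...,S_ℓ) in R with ℓ ≤ 100r⁵, head x and tail y, such that the last lazy element S_q (if any) satisfies q ≤ ℓ − 20(r+1). -/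
/-!
Any `r` vertices of `R` have a common neighbour, since each vertex misses at most
`(1/r - μ)k` vertices. A walk whose last `r + 1` entries form a clique can idle around it
indefinitely, and cyclically shifting the clique costs nothing. A lazy step (repeating the
newest vertex `c`) makes the next `r - 1` windows span only `r` distinct vertices, which
leaves room for fresh vertices that are also adjacent to a prescribed vertex `b`; after `b`,
the block `P` of clique vertices just before the lazy step is re-entered, so that `b` joins
the clique next to `P` whenever `b` is adjacent to `P`. Starting from `x` followed by a
doubled common neighbour of `x`, such stages gather the vertices of `y`, in order, into one
block of the clique; long idling between consecutive stages keeps the lazy steps apart.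
-/

def Lazy {V : Type*} (S : ℕ → V) (ℓ i : ℕ) : Prop := i + 1 < ℓ ∧ S i = S (i + 1)

def IsWalk {V : Type*} [DecidableEq V] (r : ℕ) (R : SimpleGraph V) (S : ℕ → V)
    (ℓ : ℕ) : Prop :=
  ∀ a, a + r + 1 ≤ ℓ →
    R.IsClique ↑((Finset.range (r + 1)).image fun j => S (a + j)) ∧
    (((Finset.range (r + 1)).image fun j => S (a + j)).card = r + 1 ∨
      ((Finset.range (r + 1)).image fun j => S (a + j)).card = r) ∧
    ∀ i j, a ≤ i → i < j → j ≤ a + r → S i = S j → j = i + 1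

def IsGoodWalk {V : Type*} [DecidableEq V] (r : ℕ) (R : SimpleGraph V) (S : ℕ → V)
    (ℓ : ℕ) : Prop :=
  IsWalk r R S ℓ ∧
  ((∃ i, Lazy S ℓ i) → Lazy S ℓ r ∧ ∀ i, Lazy S ℓ i → r ≤ i) ∧
  ∀ i j, Lazy S ℓ i → Lazy S ℓ j → i < j → 20 * (r + 1) ≤ j - i

theorem SimpleGraph.exists_common_neighbor {V : Type*} [Fintype V] [DecidableEq V] [Nonempty V]
    {G : SimpleGraph V} {μ : ℝ} {r : ℕ} (hμ : 0 < μ)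
    (hdeg : ∀ v, (1 - 1 / (r : ℝ) + μ) * Fintype.card V ≤ ((G.neighborSet v).ncard : ℝ))
    (A : Finset V) (hA : A.card ≤ r) : ∃ v, ∀ a ∈ A, G.Adj a v := by
  classical
  by_contra! h
  set n : ℝ := (Fintype.card V : ℝ)
  have hn : 1 ≤ n := Nat.one_le_cast.2 Fintype.card_pos
  set nonNbr : V → Finset V := fun a => Finset.univ.filter fun v => ¬ G.Adj a v
  have hsmall : ∀ a, ((nonNbr a).card : ℝ) ≤ (1 / r - μ) * n := fun a => by
    have hsplit := Finset.card_filter_add_card_filter_not (s := Finset.univ) (G.Adj a)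
    rw [Finset.card_univ] at hsplit
    have hnbr : (G.neighborSet a).ncard = (Finset.univ.filter (G.Adj a)).card := by
      rw [Set.ncard_eq_toFinset_card']
      congr 1
      ext
      simp
    have := hdeg a
    rw [hnbr] at this
    have : ((Finset.univ.filter (G.Adj a)).card : ℝ) + (nonNbr a).card = n := by
      simp only [n, nonNbr]
      exact_mod_cast hsplit
    linarith
  have hcover : n ≤ A.card * ((1 / r - μ) * n) := by
    have hsub : (Finset.univ : Finset V) ⊆ A.biUnion nonNbr := fun v _ => by
      obtain ⟨a, ha, hav⟩ := h v
      exact Finset.mem_biUnion.2 ⟨a, ha, by simpa [nonNbr] using hav⟩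
    calc n = (Finset.univ : Finset V).card := by simp [n]
      _ ≤ ((A.biUnion nonNbr).card : ℝ) := by exact_mod_cast Finset.card_le_card hsub
      _ ≤ ∑ a ∈ A, ((nonNbr a).card : ℝ) := by exact_mod_cast Finset.card_biUnion_le
      _ ≤ ∑ _a ∈ A, (1 / r - μ) * n := Finset.sum_le_sum fun a _ => hsmall a
      _ = A.card * ((1 / r - μ) * n) := by rw [Finset.sum_const, nsmul_eq_mul]
  have hAr : (A.card : ℝ) ≤ r := by exact_mod_cast hA
  rcases Nat.eq_zero_or_pos r with rfl | hr
  · simp_all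
  have hr' : (0 : ℝ) < r := by exact_mod_cast hr
  rcases le_or_gt 0 ((1 / r - μ) * n) with hc | hc
  · have : (r : ℝ) * ((1 / r - μ) * n) = n - r * μ * n := by field_simp
    nlinarith [mul_le_mul_of_nonneg_right hAr hc,
      mul_pos (mul_pos hr' hμ) (by linarith : (0 : ℝ) < n)]
  · nlinarith [mul_nonpos_of_nonneg_of_nonpos (Nat.cast_nonneg (α := ℝ) A.card) hc.le]

namespace GoodWalk

variable {V : Type*}

section IsWalk

variable [DecidableEq V] {r : ℕ} {R : SimpleGraph V} {S : ℕ → V} {ℓ : ℕ}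
  (hS : ∀ i j, i < j → j < ℓ → j ≤ i + r →
    (j = i + 1 ∧ S i = S j) ∨ R.Adj (S i) (S j))
  (hsparse : ∀ i j, Lazy S ℓ i → Lazy S ℓ j → i < j → r ≤ j - i)
include hS hsparse

theorem le_card_image_window {a : ℕ} (ha : a + r + 1 ≤ ℓ) :
    r ≤ ((Finset.range (r + 1)).image fun j => S (a + j)).card := by
  set s := Finset.range (r + 1)
  have hrep : ∀ i j, i < j → j ≤ r → S (a + i) = S (a + j) →
      j = i + 1 ∧ Lazy S ℓ (a + i) := by
    intro i j hij hj heq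
    rcases hS (a + i) (a + j) (by omega) (by omega) (by omega) with ⟨h, -⟩ | h
    · exact ⟨by omega, by omega, by rwa [show a + i + 1 = a + j by omega]⟩
    · exact absurd heq h.ne
  -- the window contains at most one lazy pair, ending at position `e`
  obtain ⟨e, he⟩ : ∃ e, ∀ i, i < r → Lazy S ℓ (a + i) → i + 1 = e := by
    by_cases h : ∃ i, i < r ∧ Lazy S ℓ (a + i)
    · obtain ⟨i₀, hi₀, hl₀⟩ := h
      refine ⟨i₀ + 1, fun i hi hl => ?_⟩
      rcases lt_trichotomy i i₀ with hlt | rfl | hlt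
      · have := hsparse _ _ hl hl₀ (by omega); omega
      · rfl
      · have := hsparse _ _ hl₀ hl (by omega); omega
    · exact ⟨0, fun i hi hl => absurd ⟨i, hi, hl⟩ h⟩
  have hinj : Set.InjOn (fun j => S (a + j)) (s.erase e) := by
    intro i hi j hj heq
    simp only [Finset.coe_erase, Finset.coe_range, Set.mem_sdiff, Set.mem_Iio,
      Set.mem_singleton_iff, s] at hi hj
    by_contra hne
    rcases Nat.lt_or_gt_of_ne hne with hij | hij
    · obtain ⟨rfl, hl⟩ := hrep i j hij (by omega) heq
      exact hj.2 (he i (by omega) hl)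
    · obtain ⟨rfl, hl⟩ := hrep j i hij (by omega) heq.symm
      exact hi.2 (he j (by omega) hl)
  calc r ≤ (s.erase e).card := by rw [Finset.card_erase_eq_ite]; split_ifs <;> simp [s]
    _ = ((s.erase e).image fun j => S (a + j)).card := (Finset.card_image_of_injOn hinj).symm
    _ ≤ _ := Finset.card_le_card (Finset.image_subset_image (Finset.erase_subset _ _))

theorem isWalk_of_adj_or_lazy : IsWalk r R S ℓ := by
  intro a ha
  refine ⟨?_, ?_, fun i j _ hij hj heq => ?_⟩
  · rintro _ hu _ hv hne
    simp only [Finset.coe_image, Finset.coe_range, Set.mem_image, Set.mem_Iio] at hu hv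
    obtain ⟨i, hi, rfl⟩ := hu
    obtain ⟨j, hj, rfl⟩ := hv
    rcases Nat.lt_or_gt_of_ne (fun h : i = j => hne (h ▸ rfl)) with hij | hij
    · exact (hS (a + i) (a + j) (by omega) (by omega) (by omega)).resolve_left (by tauto)
    · exact ((hS (a + j) (a + i) (by omega) (by omega) (by omega)).resolve_left
        (by tauto)).symm
  · have := le_card_image_window hS hsparse ha
    have := (Finset.card_image_le (s := Finset.range (r + 1))
      (f := fun j => S (a + j))).trans_eq (Finset.card_range _)
    omega
  · exact ((hS i j hij (by omega) (by omega)).resolve_right fun h => h.ne heq).1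

end IsWalk

section Track

variable {r : ℕ} {R : SimpleGraph V} {N g : ℕ} {v c : V} {w C : List V}

/- A walk under construction is a list with the newest vertex first: appending a vertex is
`List.cons` and `w.take r` lists the `r` most recent vertices. -/

def LazyAt (w : List V) (i : ℕ) : Prop := ∃ u, w[i]? = some u ∧ w[i + 1]? = some u

@[simp]
theorem lazyAt_cons_succ {i : ℕ} : LazyAt (v :: w) (i + 1) ↔ LazyAt w i := by
  simp [LazyAt]

theorem lazyAt_cons_zero : LazyAt (v :: w) 0 ↔ w[0]? = some v := by
  simp [LazyAt, eq_comm]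

variable (r R) in
structure Track (N : ℕ) (w : List V) (g : ℕ) : Prop where
  adj_or_lazy : ∀ ⦃i j : ℕ⦄ ⦃u u' : V⦄, w[i]? = some u → w[j]? = some u' → i < j →
    j ≤ i + r → (j = i + 1 ∧ u = u') ∨ R.Adj u u'
  spaced : ∀ ⦃i j : ℕ⦄, LazyAt w i → LazyAt w j → i < j → N ≤ j - i
  not_lazyAt : ∀ ⦃i : ℕ⦄, i < g → ¬ LazyAt w i

theorem not_lazyAt_of_pairwise (hw : w.Pairwise R.Adj) (i : ℕ) : ¬ LazyAt w i := by
  rintro ⟨u, hi, hi'⟩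
  obtain ⟨hlt, rfl⟩ := List.getElem?_eq_some_iff.1 hi
  obtain ⟨hlt', hu⟩ := List.getElem?_eq_some_iff.1 hi'
  exact (List.pairwise_iff_getElem.1 hw i (i + 1) hlt hlt' (by omega)).ne hu.symm

theorem Track.of_pairwise (hw : w.Pairwise R.Adj) : Track r R N w g where
  adj_or_lazy i j u u' hi hj hij _ := by
    obtain ⟨hi, rfl⟩ := List.getElem?_eq_some_iff.1 hi
    obtain ⟨hj, rfl⟩ := List.getElem?_eq_some_iff.1 hj
    exact Or.inr (List.pairwise_iff_getElem.1 hw i j ‹_› ‹_› hij)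
  spaced i _ hi := absurd hi (not_lazyAt_of_pairwise hw i)
  not_lazyAt i _ := not_lazyAt_of_pairwise hw i

theorem Track.mono {g' : ℕ} (hT : Track r R N w g) (hg : g' ≤ g) : Track r R N w g' :=
  ⟨hT.adj_or_lazy, hT.spaced, fun _ hi => hT.not_lazyAt (by omega)⟩

theorem Track.cons (hr : 0 < r) (hT : Track r R N w g) (hv : ∀ u ∈ w.take r, R.Adj u v) :
    Track r R N (v :: w) (g + 1) := by
  have hnot : ¬ LazyAt (v :: w) 0 := by
    rw [lazyAt_cons_zero]
    intro h
    exact (hv v (List.mem_of_getElem? (by rwa [List.getElem?_take, if_pos hr]))).ne rfl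
  refine ⟨?_, ?_, ?_⟩
  · rintro (_ | i) (_ | j) u u' hi hj hij hjr
    · omega
    · simp only [List.getElem?_cons_zero, Option.some.injEq, List.getElem?_cons_succ] at hi hj
      subst hi
      refine Or.inr (hv u' (List.mem_of_getElem? (i := j) ?_)).symm
      rwa [List.getElem?_take, if_pos (by omega)]
    · omega
    · simp only [List.getElem?_cons_succ] at hi hj
      rcases hT.adj_or_lazy hi hj (by omega) (by omega) with ⟨h, h'⟩ | h
      · exact Or.inl ⟨by omega, h'⟩
      · exact Or.inr h
  · rintro (_ | i) (_ | j) hi hj hij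
    · exact absurd hi hnot
    · exact absurd hi hnot
    · omega
    · rw [lazyAt_cons_succ] at hi hj
      have := hT.spaced hi hj (by omega)
      omega
  · rintro (_ | i) hi
    · exact hnot
    · rw [lazyAt_cons_succ]
      exact hT.not_lazyAt (by omega)

theorem Track.cons_lazy (hN : 0 < N) (hT : Track r R N (v :: w) g) (hg : N ≤ g) :
    Track r R N (v :: v :: w) 0 := by
  refine ⟨?_, ?_, fun _ h => absurd h (Nat.not_lt_zero _)⟩
  · rintro (_ | i) (_ | _ | j) u u' hi hj hij hjr
    · omega
    · simp_all
    · simp only [List.getElem?_cons_zero, Option.some.injEq, List.getElem?_cons_succ] at hi hj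
      subst hi
      rcases hT.adj_or_lazy (i := 0) (j := j + 1) rfl hj (by omega) (by omega) with
        ⟨h, rfl⟩ | h
      · refine absurd (lazyAt_cons_zero.2 ?_) (hT.not_lazyAt (by omega))
        rwa [show j = 0 by omega] at hj
      · exact Or.inr h
    · omega
    · omega
    · simp only [List.getElem?_cons_succ] at hi hj
      rcases hT.adj_or_lazy (i := i) (j := j + 1) hi hj (by omega) (by omega) with
        ⟨h, h'⟩ | h
      · exact Or.inl ⟨by omega, h'⟩
      · exact Or.inr h
  · rintro (_ | i) (_ | j) hi hj hij
    · omega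
    · rw [lazyAt_cons_succ] at hj
      have : ¬ j < g := fun h => hT.not_lazyAt h hj
      omega
    · omega
    · rw [lazyAt_cons_succ] at hi hj
      have := hT.spaced hi hj (by omega)
      omega

theorem mem_take_append {l₁ l₂ : List V} {u : V} {n : ℕ} (h : u ∈ (l₁ ++ l₂).take n) :
    u ∈ l₁ ∨ u ∈ l₂.take (n - l₁.length) := by
  rw [List.take_append, List.mem_append] at h
  exact h.imp_left List.mem_of_mem_take

variable (r) in
def RecentSubset (w C : List V) : Prop := ∀ n ≤ r, w.take n ⊆ C.take n

theorem RecentSubset.refl : RecentSubset r w w := fun _ _ => List.Subset.refl _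

theorem RecentSubset.cons (h : RecentSubset r w C) : RecentSubset r (c :: w) (c :: C) := by
  rintro (_ | n) hn
  · simp
  · simpa using List.cons_subset_cons c (h n (by omega))

theorem RecentSubset.append (h : RecentSubset r w C) (B : List V) :
    RecentSubset r (B ++ w) (B ++ C) := by
  induction B with
  | nil => exact h
  | cons b B ih => exact ih.cons

theorem RecentSubset.cons_self (h : RecentSubset r w (c :: C)) :
    RecentSubset r (c :: w) (c :: C) := by
  rintro (_ | n) hn
  · simp
  · have := List.Subset.trans (h n (by omega)) (List.take_subset_take_left _ (Nat.le_succ n))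
    rw [List.take_succ_cons] at this ⊢
    exact List.cons_subset.2 ⟨List.mem_cons_self, this⟩

theorem RecentSubset.of_append {Q : List V} (h : RecentSubset r w (C ++ Q))
    (hC : r ≤ C.length) : RecentSubset r w C := fun n hn => by
  simpa [List.take_append_of_le_length (hn.trans hC)] using h n hn

variable (r R) in
/-- `w` ends in the `(r + 1)`-clique `C`. This is phrased with `RecentSubset` rather than
`C <+: w` so that it survives the lazy repetition inside a stage. -/
structure CliqueState (N : ℕ) (w C : List V) (g : ℕ) : Prop where
  track : Track r R N w g
  recent : RecentSubset r w C
  head?_eq : w.head? = C.head?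
  length_eq : C.length = r + 1
  pairwise : C.Pairwise R.Adj

theorem CliqueState.of_pairwise (hC : C.length = r + 1) (hp : C.Pairwise R.Adj) :
    CliqueState r R N C C g :=
  ⟨Track.of_pairwise hp, RecentSubset.refl, rfl, hC, hp⟩

theorem CliqueState.mono {g' : ℕ} (hS : CliqueState r R N w C g) (hg : g' ≤ g) :
    CliqueState r R N w C g' :=
  { hS with track := hS.track.mono hg }

theorem CliqueState.cons_last {P : List V} (hr : 0 < r)
    (hS : CliqueState r R N w (P ++ [c]) g) : CliqueState r R N (c :: w) (c :: P) (g + 1) := by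
  have hP : P.length = r := by simpa using hS.length_eq
  obtain ⟨hPp, -, hPc⟩ := List.pairwise_append.1 hS.pairwise
  have hcP : ∀ u ∈ P, R.Adj u c := fun u hu => hPc u hu c (List.mem_singleton_self c)
  refine ⟨hS.track.cons hr fun u hu => hcP u ?_, ?_, rfl, by simp [hP],
    List.pairwise_cons.2 ⟨fun u hu => (hcP u hu).symm, hPp⟩⟩
  · simpa [List.take_append_of_le_length hP.ge, ← hP] using hS.recent r le_rfl hu
  · exact hS.recent.cons.of_append (C := c :: P) (Q := [c]) (by simp [hP])

theorem CliqueState.rotate {A B : List V} (hr : 0 < r) (hS : CliqueState r R N w (A ++ B) g) :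
    CliqueState r R N (B ++ w) (B ++ A) (g + B.length) := by
  induction B generalizing A with
  | nil => simpa using hS
  | cons b B ih =>
    have := ih (A := A ++ [b]) (by simpa using hS)
    rw [← List.append_assoc] at this
    simpa [Nat.add_assoc, Nat.add_comm 1] using this.cons_last hr

theorem CliqueState.idle (hr : 0 < r) (hS : CliqueState r R N w C g) (m : ℕ) :
    ∃ B : List V, B.length = m * (r + 1) ∧ CliqueState r R N (B ++ w) C (g + m * (r + 1)) := by
  induction m with
  | zero => exact ⟨[], by simp, by simpa using hS⟩
  | succ m ih =>
    obtain ⟨B, hB, hSB⟩ := ih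
    refine ⟨C ++ B, by simp [hB, hS.length_eq]; ring, ?_⟩
    simpa [List.append_assoc, hS.length_eq, Nat.succ_mul, Nat.add_assoc] using
      hSB.rotate (A := []) (B := C) hr

end Track

section Construction

variable [DecidableEq V] {r : ℕ} {R : SimpleGraph V} {N g : ℕ} {c : V} {w C X Y : List V}
  (hcommon : ∀ A : Finset V, A.card ≤ r → ∃ v, ∀ a ∈ A, R.Adj a v)
include hcommon

/-- After a lazy repetition of `c` the recent vertices span at most `r - 1` distinct
vertices, so up to `r - 1` fresh vertices can be appended that are also adjacent to an
arbitrary target `z`. -/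
theorem Track.exists_fresh_block (hr : 0 < r) {C' : List V} (hT : Track r R N (c :: w) g)
    (hrec : RecentSubset r w (c :: C')) (z : V) :
    ∀ n < r, ∃ Gs : List V, Gs.length = n ∧ Track r R N (Gs ++ c :: w) (g + n) ∧
      Gs.Pairwise R.Adj ∧ (∀ G ∈ Gs, R.Adj G z) ∧
      ∀ G ∈ Gs, ∀ u ∈ (c :: C').take (r - n), R.Adj u G := by
  intro n
  induction n with
  | zero => exact fun _ => ⟨[], rfl, by simpa using hT, by simp, by simp, by simp⟩
  | succ n ih =>
    intro hn
    obtain ⟨Gs, hlen, hTG, hGp, hGz, hGC⟩ := ih (by omega)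
    set K := (c :: C').take (r - (n + 1))
    obtain ⟨v, hv⟩ := hcommon (insert z (Gs ++ K).toFinset) <| by
      have := List.toFinset_card_le (Gs ++ K)
      have : K.length ≤ r - (n + 1) := List.length_take_le _ _
      grind [Finset.card_insert_le, List.length_append]
    have hvK : ∀ u ∈ Gs ++ K, R.Adj u v := fun u hu =>
      hv u (Finset.mem_insert_of_mem (List.mem_toFinset.2 hu))
    have hfresh : ∀ u ∈ (Gs ++ c :: w).take r, R.Adj u v := by
      intro u hu
      rcases mem_take_append hu with hu | hu
      · exact hvK u (List.mem_append_left _ hu)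
      rw [hlen, show r - n = r - (n + 1) + 1 by omega, List.take_succ_cons] at hu
      refine hvK u (List.mem_append_right _ ?_)
      rcases List.mem_cons.1 hu with rfl | hu
      · obtain ⟨m, hm⟩ : ∃ m, r - (n + 1) = m + 1 := ⟨r - (n + 1) - 1, by omega⟩
        simp [K, hm]
      · exact hrec _ (by omega) hu
    refine ⟨v :: Gs, by simp [hlen], by simpa [Nat.add_assoc] using hTG.cons hr hfresh,
      List.pairwise_cons.2 ⟨fun G hG => (hvK G (List.mem_append_left _ hG)).symm, hGp⟩,
      List.forall_mem_cons.2 ⟨(hv z (Finset.mem_insert_self _ _)).symm, hGz⟩,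
      List.forall_mem_cons.2 ⟨fun u hu => hvK u (List.mem_append_right _ hu),
        fun G hG u hu => hGC G hG u (List.take_subset_take_left _ (by omega) hu)⟩⟩

/-- One stage: repeat the newest vertex `c` (the lazy step), append fresh vertices `Gs`
adjacent to `z`, then `b`, re-enter `c :: P`, and idle until the next lazy step is legal. -/
theorem CliqueState.exists_stage (hr : 0 < r) (hN : 0 < N) {P Q : List V}
    (hS : CliqueState r R N w (c :: P ++ Q) g) (hg : N ≤ g) (hP : P.length < r) (z : V) :
    ∃ Gs : List V, Gs.length = r - (P.length + 1) ∧ (∀ G ∈ Gs, R.Adj G z) ∧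
      ∀ b, (∀ u ∈ Gs ++ c :: P, R.Adj u b) →
        ∃ B : List V, B.length = N * (r + 1) + (r + 1) ∧
          CliqueState r R N (B ++ c :: w) (c :: P ++ b :: Gs) N := by
  obtain ⟨w, rfl⟩ := List.head?_eq_some_iff.1 hS.head?_eq
  have htake : ∀ n ≤ P.length + 1, (c :: P ++ Q).take n ⊆ c :: P := fun n hn =>
    List.Subset.trans (List.take_subset_take_left _ hn) (by simp [List.take_left'])
  obtain ⟨Gs, hlen, hTG, hGp, hGz, hGC⟩ := (hS.track.cons_lazy hN hg).exists_fresh_block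
    hcommon hr hS.recent z (r - (P.length + 1)) (by omega)
  have hGP : ∀ G ∈ Gs, ∀ u ∈ c :: P, R.Adj G u := fun G hG u hu =>
    (hGC G hG u (by simpa [show r - (r - (P.length + 1)) = P.length + 1 by omega,
      List.take_left'] using hu)).symm
  refine ⟨Gs, hlen, hGz, fun b hb => ?_⟩
  have hTb : Track r R N (b :: Gs ++ c :: c :: w) (0 + Gs.length + 1) := by
    refine hlen ▸ hTG.cons hr fun u hu => hb u ?_
    rcases mem_take_append hu with hu | hu
    · exact List.mem_append_left _ hu
    rw [hlen, show r - (r - (P.length + 1)) = P.length + 1 by omega, List.take_succ_cons] at hu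
    refine List.mem_append_right _ ?_
    rcases List.mem_cons.1 hu with rfl | hu
    · exact List.mem_cons_self
    · exact htake P.length (by omega) (hS.recent _ (by omega) hu)
  -- despite the repeated `c`, the newest entries lie in the clique `b :: Gs ++ c :: P`
  have hS' :
      CliqueState r R N (b :: Gs ++ c :: c :: w) (b :: Gs ++ c :: P) (Gs.length + 1) := by
    refine ⟨by simpa using hTb, ?_, rfl, by simp [hlen]; omega, ?_⟩
    · refine RecentSubset.of_append (Q := Q) ?_ (by simp [hlen]; omega)
      simpa using hS.recent.cons_self.append (b :: Gs)
    · exact List.pairwise_cons.2 ⟨fun u hu => (hb u hu).symm,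
        List.pairwise_append.2 ⟨hGp, (List.pairwise_append.1 hS.pairwise).1, hGP⟩⟩
  obtain ⟨B, hB, hSB⟩ := (hS'.rotate (A := b :: Gs) (B := c :: P) hr).idle hr N
  refine ⟨B ++ c :: P ++ b :: Gs, ?_, by simpa using hSB.mono (by nlinarith)⟩
  simp only [List.length_append, List.length_cons, hB, hlen]
  omega

/-- The walk starts with `X`, a common neighbour `v` of `X` and the lazy repetition of `v`;
a first stage creates clique vertices adjacent to `y₀`, a second one inserts `y₀`. -/
theorem exists_start (hr : 2 ≤ r) (hN : 0 < N) (hX : X.length = r)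
    (hXp : X.Pairwise R.Adj) (y₀ : V) :
    ∃ v w C, CliqueState r R N w C N ∧ v :: v :: X <:+ w ∧ C.head? = some y₀ ∧
      w.length ≤ 3 * ((N + 2) * (r + 1)) := by
  obtain ⟨v, hv⟩ := hcommon X.toFinset ((List.toFinset_card_le X).trans hX.le)
  have S₀ : CliqueState r R N (v :: X) (v :: ([] ++ X)) N := CliqueState.of_pairwise
    (by simp [hX])
    (List.pairwise_cons.2 ⟨fun u hu => (hv u (List.mem_toFinset.2 hu)).symm, hXp⟩)
  obtain ⟨Gs, hGl, hGz, hstage⟩ := S₀.exists_stage hcommon (by omega) hN le_rfl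
    (by simp; omega) y₀
  obtain ⟨b, hb⟩ := hcommon (Gs ++ [v]).toFinset
    ((List.toFinset_card_le _).trans (by simp [hGl]; omega))
  obtain ⟨B₁, hB₁, S₁⟩ :=
    hstage b fun u hu => hb u (List.mem_toFinset.2 (by simpa using hu))
  obtain ⟨G₀, Gs, rfl⟩ :=
    List.exists_cons_of_length_pos (show 0 < Gs.length by simp at hGl; omega)
  have S₂ := (show CliqueState r R N _ ([v, b] ++ G₀ :: Gs) N by simpa using S₁).rotate
    (by omega)
  obtain ⟨Hs, hHl, hHz, hstage⟩ := (show CliqueState r R N _ (G₀ :: [] ++ (Gs ++ [v, b])) _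
    by simpa using S₂).exists_stage hcommon (by omega) hN (by omega) (by simp; omega) y₀
  obtain ⟨B₂, hB₂, S₃⟩ := hstage y₀ fun u hu => by
    rcases List.mem_append.1 hu with hu | hu
    · exact hHz u hu
    · exact (List.mem_singleton.1 hu) ▸ hGz G₀ List.mem_cons_self
  have S₄ :=
    (show CliqueState r R N _ ([G₀] ++ y₀ :: Hs) N by simpa using S₃).rotate (by omega)
  refine ⟨v, _, _, S₄.mono (by omega), ?_, rfl, ?_⟩
  · exact ⟨y₀ :: Hs ++ B₂ ++ G₀ :: G₀ :: Gs ++ B₁, by simp⟩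
  · simp only [List.length_append, List.length_cons, List.length_nil, hB₁, hB₂] at hGl hHl ⊢
    nlinarith [show Hs.length + 1 = r by omega, show Gs.length + 2 = r by omega]

theorem CliqueState.exists_next (hr : 0 < r) (hN : 0 < N) (hY : Y.length = r)
    (hYp : Y.Pairwise R.Adj) {w C : List V} (hS : CliqueState r R N w C N) {t : ℕ}
    (ht : 0 < t) (htr : t < r) (hC : C.take t = Y.take t) :
    ∃ B C', B.length ≤ (N + 2) * (r + 1) ∧ CliqueState r R N (B ++ w) C' N ∧
      C'.take (t + 1) = Y.take (t + 1) := by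
  obtain ⟨c, P, hcP⟩ := List.exists_cons_of_length_pos (l := Y.take t) (by simp; omega)
  have hPl : P.length + 1 = t := by
    have := congrArg List.length hcP
    simp only [List.length_take, List.length_cons] at this
    omega
  rw [← List.take_append_drop t C, hC, hcP] at hS
  have hYt : t < Y.length := hY ▸ htr
  have hb : ∀ u ∈ c :: P, R.Adj u Y[t] := by
    have := List.take_append_getElem hYt ▸ hYp.sublist (List.take_sublist (t + 1) Y)
    rw [hcP] at this
    exact fun u hu => (List.pairwise_append.1 this).2.2 u hu _ (List.mem_singleton_self _)
  obtain ⟨Gs, hGl, hGz, hstage⟩ := hS.exists_stage hcommon hr hN le_rfl (by omega) Y[t]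
  obtain ⟨B, hB, hS'⟩ := hstage Y[t] fun u hu => by
    rcases List.mem_append.1 hu with hu | hu
    · exact hGz u hu
    · exact hb u hu
  obtain ⟨w', rfl⟩ := List.head?_eq_some_iff.1 hS.head?_eq
  refine ⟨B ++ [c], _, ?_, by simpa using hS', ?_⟩
  · simp only [List.length_append, hB, List.length_singleton]
    nlinarith
  · rw [← List.take_append_getElem hYt, hcP, List.take_succ_cons, List.take_append,
      List.take_of_length_le (by omega), show t - P.length = 1 by omega]
    simp

theorem exists_track (hr : 2 ≤ r) (hN : 0 < N) (hX : X.length = r) (hXp : X.Pairwise R.Adj)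
    (hY : Y.length = r) (hYp : Y.Pairwise R.Adj) :
    ∃ v w, Track r R N w N ∧ v :: v :: X <:+ w ∧ Y <+: w ∧
      w.length ≤ (r + 3) * ((N + 2) * (r + 1)) := by
  have hstages : ∀ t, 1 ≤ t → t ≤ r → ∃ v w C, CliqueState r R N w C N ∧
      v :: v :: X <:+ w ∧ C.take t = Y.take t ∧ w.length ≤ (t + 2) * ((N + 2) * (r + 1)) := by
    intro t ht
    induction t, ht using Nat.le_induction with
    | base =>
      intro _
      obtain ⟨y₀, Y', rfl⟩ := List.exists_cons_of_length_pos (show 0 < Y.length by omega)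
      obtain ⟨v, w, C, hS, hsuf, hC, hlen⟩ := exists_start hcommon hr hN hX hXp y₀
      obtain ⟨C', rfl⟩ := List.head?_eq_some_iff.1 hC
      exact ⟨v, w, _, hS, hsuf, by simp, hlen⟩
    | succ t ht ih =>
      intro htr
      obtain ⟨v, w, C, hS, hsuf, hC, hlen⟩ := ih (by omega)
      obtain ⟨B, C', hB, hS', hC'⟩ := hS.exists_next hcommon (by omega) hN hY hYp ht htr hC
      refine ⟨v, B ++ w, C', hS', hsuf.trans (List.suffix_append _ _), hC', ?_⟩
      rw [List.length_append]
      nlinarith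
  obtain ⟨v, w, C, hS, hsuf, hC, hlen⟩ := hstages r (by omega) le_rfl
  have hfin := (show CliqueState r R N w ([] ++ C) N by simpa using hS).rotate (by omega)
  refine ⟨v, C ++ w, hfin.track.mono (by omega), hsuf.trans (List.suffix_append _ _), ?_, ?_⟩
  · rw [← List.take_of_length_le hY.le, ← hC]
    exact (List.take_prefix r C).trans (List.prefix_append C w)
  · rw [List.length_append, hS.length_eq]
    nlinarith

end Construction

section Conversion

variable {r N g : ℕ} {R : SimpleGraph V} {w : List V} {d : V}

theorem getElem?_eq_reverse_getD {i : ℕ} (hi : i < w.length) :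
    w[w.length - 1 - i]? = some (w.reverse.getD i d) := by
  rw [List.getD_eq_getElem?_getD, List.getElem?_reverse hi, List.getElem?_eq_getElem (by omega)]
  rfl

theorem lazyAt_of_lazy_reverse {q : ℕ} (h : Lazy (fun i => w.reverse.getD i d) w.length q) :
    LazyAt w (w.length - 2 - q) := by
  obtain ⟨hq, heq⟩ := h
  refine ⟨w.reverse.getD q d, ?_, ?_⟩
  · rw [show w.reverse.getD q d = w.reverse.getD (q + 1) d from heq,
      show w.length - 2 - q = w.length - 1 - (q + 1) by omega]
    exact getElem?_eq_reverse_getD hq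
  · rw [show w.length - 2 - q + 1 = w.length - 1 - q by omega]
    exact getElem?_eq_reverse_getD (by omega)

theorem Track.isWalk_reverse [DecidableEq V] (hT : Track r R N w g) (hN : r ≤ N) :
    IsWalk r R (fun i => w.reverse.getD i d) w.length := by
  refine isWalk_of_adj_or_lazy (fun i j hij hj hji => ?_) fun i j hi hj hij => ?_
  · rcases hT.adj_or_lazy (getElem?_eq_reverse_getD (d := d) hj)
      (getElem?_eq_reverse_getD (d := d) (i := i) (by omega)) (by omega) (by omega) with
      ⟨h, h'⟩ | h
    · exact Or.inl ⟨by omega, h'.symm⟩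
    · exact Or.inr h.symm
  · have := hT.spaced (lazyAt_of_lazy_reverse hj) (lazyAt_of_lazy_reverse hi)
      (by have := hi.1; have := hj.1; omega)
    have := hi.1
    omega

theorem exists_goodWalk_of_track [DecidableEq V] {x y : Fin r → V}
    (hT : Track r R (20 * (r + 1)) w (20 * (r + 1)))
    (hhead : d :: d :: (List.ofFn x).reverse <:+ w) (htail : (List.ofFn y).reverse <+: w) :
    2 * r ≤ w.length ∧ ∃ S : ℕ → V, IsGoodWalk r R S w.length ∧
      (∀ j : Fin r, S j.val = x j) ∧ (∀ j : Fin r, S (w.length - r + j.val) = y j) ∧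
      ∀ q, Lazy S w.length q → q + 20 * (r + 1) < w.length := by
  set S : ℕ → V := fun i => w.reverse.getD i d
  have hage : ∀ q, Lazy S w.length q → 20 * (r + 1) ≤ w.length - 2 - q := fun q hq =>
    not_lt.1 fun h => hT.not_lazyAt h (lazyAt_of_lazy_reverse hq)
  have hspaced : ∀ i j, Lazy S w.length i → Lazy S w.length j → i < j →
      20 * (r + 1) ≤ j - i := fun i j hi hj hij => by
      have := hT.spaced (lazyAt_of_lazy_reverse hj) (lazyAt_of_lazy_reverse hi)
        (by have := hi.1; have := hj.1; omega)
      have := hi.1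
      omega
  obtain ⟨pre, hpre⟩ := hhead
  have hlazy_r : Lazy S w.length r :=
    ⟨by rw [← hpre]; simp; omega, by simp [S, ← hpre, List.getD_eq_getElem?_getD]⟩
  refine ⟨by have := hage r hlazy_r; omega, S, ⟨hT.isWalk_reverse (by omega),
    fun _ => ⟨hlazy_r, fun i hi => ?_⟩, hspaced⟩, fun j => ?_, fun j => ?_,
    fun q hq => by have := hage q hq; omega⟩
  · by_contra! h
    have := hspaced i r hi hlazy_r h
    omega
  · simp [S, ← hpre, List.getD_eq_getElem?_getD, List.getElem?_append_left]
  · obtain ⟨post, hpost⟩ := htail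
    have : w.length - r + j = post.reverse.length + j := by simp [← hpost]
    simp only [S, this]
    simp [← hpost, List.getD_eq_getElem?_getD]

end Conversion

end GoodWalk

/-- Lemma 6.2: in a `k`-vertex graph `R` with `δ(R) ≥ (1 - 1/r + μ)k` (`k` large), any
two disjoint ordered copies `x, y` of `K_r` are joined by a good walk of order at most
`100r⁵` with head `x` and tail `y`, whose last lazy element (if any) occurs at least
`20(r+1)` entries before the end. -/
theorem stmt13 (μ : ℝ) (hμ : 0 < μ) (r : ℕ) (hr : 2 ≤ r) :
    ∃ k₀ : ℕ, ∀ k : ℕ, k₀ ≤ k → ∀ R : SimpleGraph (Fin k),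
      (∀ v : Fin k, (1 - 1 / (r : ℝ) + μ) * k ≤ ((R.neighborSet v).ncard : ℝ)) →
      ∀ x y : Fin r → Fin k, Function.Injective x → Function.Injective y →
        Disjoint (Set.range x) (Set.range y) →
        (∀ i j, i ≠ j → R.Adj (x i) (x j)) → (∀ i j, i ≠ j → R.Adj (y i) (y j)) →
        ∃ ℓ : ℕ, 2 * r ≤ ℓ ∧ ℓ ≤ 100 * r ^ 5 ∧ ∃ S : ℕ → Fin k,
          IsGoodWalk r R S ℓ ∧
          (∀ j : Fin r, S j.val = x j) ∧
          (∀ j : Fin r, S (ℓ - r + j.val) = y j) ∧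
          ∀ q, Lazy S ℓ q → q + 20 * (r + 1) < ℓ := by
  refine ⟨0, fun k _ R hdeg x y _ _ _ hx hy => ?_⟩
  have : Nonempty (Fin k) := ⟨x ⟨0, by omega⟩⟩
  have hcommon := SimpleGraph.exists_common_neighbor (G := R) (r := r) hμ
    (by simpa only [Fintype.card_fin] using hdeg)
  have hclique : ∀ z : Fin r → Fin k, (∀ i j, i ≠ j → R.Adj (z i) (z j)) →
      (List.ofFn z).reverse.Pairwise R.Adj := fun z hz =>
    List.pairwise_reverse.2 (List.pairwise_ofFn.2 fun i j hij => hz j i hij.ne')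
  obtain ⟨v, w, hT, hhead, htail, hlen⟩ := GoodWalk.exists_track (N := 20 * (r + 1)) hcommon hr
    (by positivity) (by simp) (hclique x hx) (by simp) (hclique y hy)
  obtain ⟨h2r, S, hS⟩ := GoodWalk.exists_goodWalk_of_track hT hhead htail
  refine ⟨w.length, h2r, hlen.trans ?_, S, hS⟩
  have : r ^ 5 = r ^ 2 * r ^ 3 := by ring
  nlinarith [pow_le_pow_left₀ (Nat.zero_le 2) hr 2, Nat.zero_le (r ^ 3)]
end

section
/- Let c, μ, η, γ > 0 with c + μ ≤ 1. There exists ζ > 0 such that for sufficiently large n the following holds. If G is an n-vertex graph with δ(G) ≥ (c+μ)n such that every vertex v has a collection L(v) of at least ηn pairwise vertex-disjoint absorbers, then there is a set A ⊆ V(G) with 2rζn ≤ |A| ≤ γn such that every v ∈ V(G) satisfies |N(v) ∩ A| ≥ (c + μ/2)|A| and v has at least ζn pairwise vertex-disjoint absorbers inside A. -/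
/-- `p` is (an embedding of) an `r`-path of order `ℓ` in `G`: the vertices are
distinct and any two at distance at most `r` along the path are adjacent. -/
def IsRPathMap {V : Type*} (G : SimpleGraph V) (r ℓ : ℕ) (p : Fin ℓ → V) : Prop :=
  Function.Injective p ∧
  ∀ i j : Fin ℓ, i.val < j.val → j.val ≤ i.val + r → G.Adj (p i) (p j)

/-- Insert the vertex `v` into the middle of the `2r`-vertex sequence `p`. -/
def insertMid {V : Type*} (r : ℕ) (v : V) (p : Fin (2 * r) → V) :
    Fin (2 * r + 1) → V := fun i =>
  if h : i.val < r then p ⟨i.val, by omega⟩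
  else if h2 : i.val = r then v
  else p ⟨i.val - 1, by have := i.isLt; omega⟩

/-- `p` is an absorber for the vertex `v`: an `r`-path of order `2r` such that its
vertices together with `v` (inserted in the middle) form an `r`-path of order `2r + 1`
with the same ends. -/
def IsAbsorber {V : Type*} (r : ℕ) (G : SimpleGraph V) (v : V)
    (p : Fin (2 * r) → V) : Prop :=
  IsRPathMap G r (2 * r) p ∧ v ∉ Set.range p ∧
  IsRPathMap G r (2 * r + 1) (insertMid r v p)

/-!
Choose `A` by including every vertex independently with probability `p`. For a family of
disjoint blocks of size `s`, the number of blocks that fall entirely into `A` is a binomial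
variable with parameters `#J` and `p ^ s`, so its exponential moments are explicit and the
Chernoff bound makes a relative deviation `ε` have probability at most
`exp (-ε² p ^ s #J / 4)`. Neighbourhoods (blocks of size one), the absorber families
(blocks of size `2r`) and `V` itself give `2n + 1` events, each of probability
`exp (-Ω(n))`, so for large `n` some outcome avoids all of them.
-/

open Finset Real

lemma Set.PairwiseDisjoint.exists_index {α ι : Type*} {J : Finset ι} {B : ι → Finset α}
    (hB : (J : Set ι).PairwiseDisjoint B) :
    ∃ idx : α → Option ι, ∀ a j, idx a = some j ↔ j ∈ J ∧ a ∈ B j := by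
  classical
  refine ⟨fun a => if h : ∃ j ∈ J, a ∈ B j then some h.choose else none, fun a j => ?_⟩
  dsimp only
  split_ifs with h
  · obtain ⟨hJ, hB'⟩ := h.choose_spec
    refine ⟨fun hj => Option.some_injective _ hj ▸ ⟨hJ, hB'⟩, fun ⟨hj, ha⟩ => ?_⟩
    rw [hB.elim_finset hJ hj a hB' ha]
  · simpa using fun hj ha => h ⟨j, hj, ha⟩

namespace RandomSubset

variable {V : Type*} [Fintype V]

/-- `ω` encodes the random subset `{v | ω v}`; under `weight p` its vertices are included
independently with probability `p`. -/
def weight (p : ℝ) (ω : V → Bool) : ℝ := ∏ v, if ω v then p else 1 - p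

variable {p : ℝ}

lemma weight_nonneg (hp0 : 0 ≤ p) (hp1 : p ≤ 1) (ω : V → Bool) : 0 ≤ weight p ω :=
  prod_nonneg fun v _ => by split <;> linarith

variable [DecidableEq V]

open Classical in
noncomputable def prob (p : ℝ) (E : (V → Bool) → Prop) : ℝ := ∑ ω with E ω, weight p ω

def toFinset (ω : V → Bool) : Finset V := {v | ω v = true}

def fullBlockCount {ι : Type*} (J : Finset ι) (B : ι → Finset V) (ω : V → Bool) : ℕ :=
  #{j ∈ J | B j ⊆ toFinset ω}

lemma sum_weight (p : ℝ) : ∑ ω : V → Bool, weight p ω = 1 := by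
  simp only [weight, ← Fintype.prod_sum (fun (_ : V) (b : Bool) => if b then p else 1 - p)]
  simp

lemma prob_mono (hp0 : 0 ≤ p) (hp1 : p ≤ 1) {E F : (V → Bool) → Prop} (h : ∀ ω, E ω → F ω) :
    prob p E ≤ prob p F := by
  classical
  exact sum_le_sum_of_subset_of_nonneg (monotone_filter_right _ fun ω _ => h ω)
    fun ω _ _ => weight_nonneg hp0 hp1 ω

lemma prob_le_sum_weight_mul (hp0 : 0 ≤ p) (hp1 : p ≤ 1) {E : (V → Bool) → Prop}
    {f : (V → Bool) → ℝ} (hf0 : ∀ ω, 0 ≤ f ω) (hf1 : ∀ ω, E ω → 1 ≤ f ω) :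
    prob p E ≤ ∑ ω, weight p ω * f ω := by
  classical
  calc prob p E ≤ ∑ ω with E ω, weight p ω * f ω :=
        sum_le_sum fun ω hω => le_mul_of_one_le_right (weight_nonneg hp0 hp1 ω)
          (hf1 ω (mem_filter.1 hω).2)
    _ ≤ ∑ ω, weight p ω * f ω := sum_le_sum_of_subset_of_nonneg (filter_subset _ _)
        fun ω _ _ => mul_nonneg (weight_nonneg hp0 hp1 ω) (hf0 ω)

lemma prob_or_le (hp0 : 0 ≤ p) (hp1 : p ≤ 1) (E F : (V → Bool) → Prop) :
    prob p (fun ω => E ω ∨ F ω) ≤ prob p E + prob p F := by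
  classical
  simp only [prob, sum_filter, ← sum_add_distrib]
  gcongr with ω
  have := weight_nonneg hp0 hp1 ω
  split_ifs <;> simp_all

lemma prob_exists_le (hp0 : 0 ≤ p) (hp1 : p ≤ 1) {K : Type*} [Fintype K]
    (E : K → (V → Bool) → Prop) : prob p (fun ω => ∃ k, E k ω) ≤ ∑ k, prob p (E k) := by
  classical
  calc prob p (fun ω => ∃ k, E k ω) ≤ ∑ ω, weight p ω * ∑ k, if E k ω then 1 else 0 := by
        refine prob_le_sum_weight_mul hp0 hp1 (fun ω => sum_nonneg fun k _ => ?_) ?_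
        · split <;> norm_num
        · rintro ω ⟨k, hk⟩
          calc (1 : ℝ) = if E k ω then 1 else 0 := (if_pos hk).symm
            _ ≤ ∑ k, if E k ω then 1 else 0 :=
                single_le_sum (f := fun k => if E k ω then (1 : ℝ) else 0)
                  (fun k _ => by split <;> norm_num) (mem_univ k)
    _ = ∑ k, prob p (E k) := by
        simp only [mul_sum, mul_ite, mul_one, mul_zero, prob, sum_filter]
        exact sum_comm

lemma exists_not_of_prob_lt_one {E : (V → Bool) → Prop} (h : prob p E < 1) : ∃ ω, ¬ E ω := by
  classical
  by_contra! hE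
  simp only [prob, hE, filter_true, sum_weight] at h
  exact lt_irrefl _ h

lemma sum_weight_mul_prod_fiber {ι : Type*} [Fintype ι] [DecidableEq ι] (p : ℝ) (idx : V → ι)
    (g : ∀ j, ({v // idx v = j} → Bool) → ℝ) :
    ∑ ω : V → Bool, weight p ω * ∏ j, g j (fun v => ω v) =
      ∏ j, ∑ σ : {v // idx v = j} → Bool, weight p σ * g j σ := by
  rw [Fintype.prod_sum]
  refine Fintype.sum_equiv (((Equiv.sigmaFiberEquiv idx).symm.arrowCongr (Equiv.refl Bool)).trans
    (Equiv.piCurry fun _ _ => Bool)) _ _ fun ω => ?_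
  rw [prod_mul_distrib, weight, ← Fintype.prod_fiberwise idx]
  rfl

lemma sum_weight_mul_ite_forall {S : Type*} [Fintype S] [DecidableEq S] (p a b : ℝ) :
    ∑ σ : S → Bool, weight p σ * (if ∀ v, σ v = true then a else b) =
      p ^ Fintype.card S * a + (1 - p ^ Fintype.card S) * b := by
  have hite : ∀ σ : S → Bool, (if ∀ v, σ v = true then a else b) =
      b + if (fun _ => true) = σ then a - b else 0 := by
    intro σ
    simp only [funext_iff, eq_comm (a := true)]
    split_ifs <;> ring
  simp only [hite, mul_add, sum_add_distrib, ← sum_mul, sum_weight, mul_ite, mul_zero,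
    sum_ite_eq, mem_univ, if_true]
  simp only [weight, if_true, prod_const, card_univ]
  ring

lemma sum_weight_mul_pow_fullBlockCount {ι : Type*} [Fintype ι] {J : Finset ι}
    {B : ι → Finset V} (hB : (J : Set ι).PairwiseDisjoint B) (p u : ℝ) :
    ∑ ω : V → Bool, weight p ω * u ^ fullBlockCount J B ω =
      ∏ j ∈ J, (p ^ #(B j) * u + (1 - p ^ #(B j))) := by
  classical
  -- Label each vertex by the block containing it: `u ^ fullBlockCount J B ω` becomes a product
  -- over the fibres of the labelling, which are independent under `weight p`.
  obtain ⟨idx, hidx⟩ := hB.exists_index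
  have hcard : ∀ j ∈ J, Fintype.card {v // idx v = some j} = #(B j) := by
    intro j hj
    rw [Fintype.card_subtype]
    congr 1
    ext v
    simp [hidx, hj]
  have hpow : ∀ ω : V → Bool, u ^ fullBlockCount J B ω = ∏ o : Option ι,
      if ∀ v : {v // idx v = o}, ω v = true then (if ∃ j ∈ J, o = some j then u else 1) else 1 := by
    intro ω
    rw [Fintype.prod_option, fullBlockCount, ← prod_const, prod_filter, ← Fintype.prod_ite_mem]
    simp only [Option.some_inj, exists_eq_right', reduceCtorEq, and_false, exists_false,
      if_false, ite_self, one_mul]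
    refine prod_congr rfl fun j _ => ?_
    by_cases hj : j ∈ J
    · simp [hidx, hj, subset_iff, toFinset]
    · simp [hj]
  simp only [hpow]
  rw [sum_weight_mul_prod_fiber p idx (fun o σ => if ∀ v, σ v = true then
    (if ∃ j ∈ J, o = some j then u else 1) else 1)]
  simp only [sum_weight_mul_ite_forall, Fintype.prod_option, Option.some_inj, exists_eq_right',
    reduceCtorEq, and_false, exists_false, if_false]
  rw [← Fintype.prod_ite_mem J]
  simp only [mul_one, add_sub_cancel, one_mul]
  refine prod_congr rfl fun j _ => ?_
  by_cases hj : j ∈ J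
  · simp [hj, hcard]
  · simp [hj]

lemma prob_mul_le_mul_fullBlockCount_le {ι : Type*} [Fintype ι] (hp0 : 0 ≤ p) (hp1 : p ≤ 1)
    {J : Finset ι} {B : ι → Finset V} (hB : (J : Set ι).PairwiseDisjoint B) (t a : ℝ) :
    prob p (fun ω => t * a ≤ t * fullBlockCount J B ω) ≤
      exp (-(t * a)) * ∏ j ∈ J, (p ^ #(B j) * exp t + (1 - p ^ #(B j))) := by
  calc prob p (fun ω => t * a ≤ t * fullBlockCount J B ω)
      ≤ ∑ ω, weight p ω * (exp (-(t * a)) * exp t ^ fullBlockCount J B ω) := by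
        refine prob_le_sum_weight_mul hp0 hp1 (fun ω => by positivity) fun ω hω => ?_
        rw [← exp_nat_mul, ← exp_add]
        exact one_le_exp (by linarith)
    _ = exp (-(t * a)) * ∏ j ∈ J, (p ^ #(B j) * exp t + (1 - p ^ #(B j))) := by
        simp only [mul_left_comm _ (exp _), ← mul_sum, sum_weight_mul_pow_fullBlockCount hB]

lemma exp_neg_mul_add_le_exp_neg {ρ ε : ℝ} (hρ0 : 0 ≤ ρ) (hε : |ε| ≤ 1) :
    exp (-(ε / 2 * ((1 + ε) * ρ))) * (ρ * exp (ε / 2) + (1 - ρ)) ≤ exp (-(ε ^ 2 * ρ / 4)) := by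
  have hexp : exp (ε / 2) - 1 - ε / 2 ≤ (ε / 2) ^ 2 :=
    (le_abs_self _).trans (abs_exp_sub_one_sub_id_le (by rw [abs_div]; norm_num; linarith))
  calc exp (-(ε / 2 * ((1 + ε) * ρ))) * (ρ * exp (ε / 2) + (1 - ρ))
      ≤ exp (-(ε / 2 * ((1 + ε) * ρ))) * exp (ρ * (exp (ε / 2) - 1)) := by
        gcongr
        linarith [add_one_le_exp (ρ * (exp (ε / 2) - 1))]
    _ ≤ exp (-(ε ^ 2 * ρ / 4)) := by
        rw [← exp_add, exp_le_exp]
        nlinarith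

theorem prob_chernoff {ι : Type*} [Fintype ι] (hp0 : 0 ≤ p) (hp1 : p ≤ 1) {J : Finset ι}
    {B : ι → Finset V} (hB : (J : Set ι).PairwiseDisjoint B) {s : ℕ} (hs : ∀ j ∈ J, #(B j) = s)
    {ε : ℝ} (hε : |ε| ≤ 1) :
    prob p (fun ω => ε * ((1 + ε) * p ^ s * #J) ≤ ε * fullBlockCount J B ω) ≤
      exp (-(ε ^ 2 * p ^ s * #J / 4)) := by
  have hρ0 : 0 ≤ p ^ s := pow_nonneg hp0 s
  have hρ1 : p ^ s ≤ 1 := pow_le_one₀ hp0 hp1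
  calc prob p (fun ω => ε * ((1 + ε) * p ^ s * #J) ≤ ε * fullBlockCount J B ω)
      ≤ prob p (fun ω => ε / 2 * ((1 + ε) * p ^ s * #J) ≤ ε / 2 * fullBlockCount J B ω) :=
        prob_mono hp0 hp1 fun ω hω => by linarith
    _ ≤ (exp (-(ε / 2 * ((1 + ε) * p ^ s))) * (p ^ s * exp (ε / 2) + (1 - p ^ s))) ^ #J := by
        refine (prob_mul_le_mul_fullBlockCount_le hp0 hp1 hB _ _).trans_eq ?_
        rw [prod_congr rfl fun j hj => by rw [hs j hj], prod_const, mul_pow, ← exp_nat_mul]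
        ring_nf
    _ ≤ exp (-(ε ^ 2 * p ^ s / 4)) ^ #J :=
        pow_le_pow_left₀ (mul_nonneg (exp_pos _).le (by nlinarith [exp_pos (ε / 2)]))
          (exp_neg_mul_add_le_exp_neg hρ0 hε) _
    _ = exp (-(ε ^ 2 * p ^ s * #J / 4)) := by
        rw [← exp_nat_mul]
        ring_nf

theorem prob_fullBlockCount_le {ι : Type*} [Fintype ι] (hp0 : 0 ≤ p) (hp1 : p ≤ 1)
    {J : Finset ι} {B : ι → Finset V} (hB : (J : Set ι).PairwiseDisjoint B) {s : ℕ}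
    (hs : ∀ j ∈ J, #(B j) = s) {δ : ℝ} (hδ0 : 0 ≤ δ) (hδ1 : δ ≤ 1) :
    prob p (fun ω => fullBlockCount J B ω ≤ (1 - δ) * p ^ s * #J) ≤
      exp (-(δ ^ 2 * p ^ s * #J / 4)) := by
  rw [← neg_sq]
  refine (prob_mono hp0 hp1 fun ω hω => ?_).trans
    (prob_chernoff hp0 hp1 hB hs (ε := -δ) (by rw [abs_neg, abs_of_nonneg hδ0]; exact hδ1))
  rw [← sub_eq_add_neg]
  exact mul_le_mul_of_nonpos_left hω (neg_nonpos.2 hδ0)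

theorem prob_le_fullBlockCount {ι : Type*} [Fintype ι] (hp0 : 0 ≤ p) (hp1 : p ≤ 1)
    {J : Finset ι} {B : ι → Finset V} (hB : (J : Set ι).PairwiseDisjoint B) {s : ℕ}
    (hs : ∀ j ∈ J, #(B j) = s) {δ : ℝ} (hδ0 : 0 ≤ δ) (hδ1 : δ ≤ 1) :
    prob p (fun ω => (1 + δ) * p ^ s * #J ≤ fullBlockCount J B ω) ≤
      exp (-(δ ^ 2 * p ^ s * #J / 4)) :=
  (prob_mono hp0 hp1 fun ω hω => mul_le_mul_of_nonneg_left hω hδ0).trans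
    (prob_chernoff hp0 hp1 hB hs (by rw [abs_of_nonneg hδ0]; exact hδ1))

lemma fullBlockCount_singleton (T : Finset V) (ω : V → Bool) :
    fullBlockCount T (fun v => {v}) ω = #(T ∩ toFinset ω) := by
  simp only [fullBlockCount, singleton_subset_iff, filter_mem_eq_inter]

end RandomSubset

open RandomSubset in
theorem exists_finset_meeting_sets_and_blocks {V K ι : Type*} [Fintype V] [DecidableEq V]
    [Fintype K] [Fintype ι] {p δ m : ℝ} {s : ℕ} (hp0 : 0 ≤ p) (hp1 : p ≤ 1) (hδ0 : 0 ≤ δ)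
    (hδ1 : δ ≤ 1) (hs : s ≠ 0) (S : K → Finset V) (J : K → Finset ι) (B : ι → Finset V)
    (hB : ∀ k, (J k : Set ι).PairwiseDisjoint B) (hBcard : ∀ k, ∀ j ∈ J k, #(B j) = s)
    (hS : ∀ k, m ≤ #(S k)) (hJ : ∀ k, m ≤ #(J k)) (hm : m ≤ Fintype.card V)
    (hexp : 2 * Fintype.card K + 1 < exp (δ ^ 2 * p ^ s * m / 4)) :
    ∃ A : Finset V, #A < (1 + δ) * p * Fintype.card V ∧ ∀ k,
      (1 - δ) * p * #(S k) < #(S k ∩ A) ∧ (1 - δ) * p ^ s * #(J k) < #{j ∈ J k | B j ⊆ A} := by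
  set κ := δ ^ 2 * p ^ s * m / 4
  have hκ : ∀ {ρ x : ℝ}, p ^ s * m ≤ ρ * x → exp (-(δ ^ 2 * ρ * x / 4)) ≤ exp (-κ) := fun h =>
    exp_le_exp.2 (by simp only [κ]; linarith [mul_le_mul_of_nonneg_left h (sq_nonneg δ)])
  have hpm : ∀ {x : ℕ}, m ≤ x → p ^ s * m ≤ p ^ 1 * x := by
    intro x h
    rw [pow_one]
    nlinarith [pow_le_of_le_one hp0 hp1 hs, pow_nonneg hp0 s, Nat.cast_nonneg (α := ℝ) x]
  have hsingle : ∀ T : Finset V, (T : Set V).PairwiseDisjoint (fun v => ({v} : Finset V)) :=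
    fun _ => pairwiseDisjoint_singleton_iff_injOn.2 (Set.injOn_id _)
  let sparse (k : K) (ω : V → Bool) : Prop :=
    fullBlockCount (S k) (fun v => {v}) ω ≤ (1 - δ) * p ^ 1 * #(S k)
  let fewBlocks (k : K) (ω : V → Bool) : Prop :=
    fullBlockCount (J k) B ω ≤ (1 - δ) * p ^ s * #(J k)
  let tooLarge (ω : V → Bool) : Prop :=
    (1 + δ) * p ^ 1 * #(univ : Finset V) ≤ fullBlockCount univ (fun v => {v}) ω
  have hbad : prob p (fun ω => (∃ k, sparse k ω) ∨ (∃ k, fewBlocks k ω) ∨ tooLarge ω) < 1 := by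
    calc _ ≤ ∑ k, prob p (sparse k) + (∑ k, prob p (fewBlocks k) + prob p tooLarge) :=
          (prob_or_le hp0 hp1 _ _).trans (add_le_add (prob_exists_le hp0 hp1 _)
            ((prob_or_le hp0 hp1 _ _).trans (add_le_add_left (prob_exists_le hp0 hp1 _) _)))
      _ ≤ ∑ k : K, exp (-κ) + (∑ k : K, exp (-κ) + exp (-κ)) := by
          refine add_le_add (sum_le_sum fun k _ => ?_) (add_le_add (sum_le_sum fun k _ => ?_) ?_)
          · exact (prob_fullBlockCount_le hp0 hp1 (hsingle _) (fun _ _ => card_singleton _)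
              hδ0 hδ1).trans (hκ (hpm (hS k)))
          · exact (prob_fullBlockCount_le hp0 hp1 (hB k) (hBcard k) hδ0 hδ1).trans
              (hκ (mul_le_mul_of_nonneg_left (hJ k) (pow_nonneg hp0 s)))
          · exact (prob_le_fullBlockCount hp0 hp1 (hsingle _) (fun _ _ => card_singleton _)
              hδ0 hδ1).trans (hκ (hpm (by simpa using hm)))
      _ = (2 * Fintype.card K + 1) * exp (-κ) := by
          simp only [sum_const, card_univ, nsmul_eq_mul]
          ring
      _ < 1 := by
          rw [exp_neg, ← div_eq_mul_inv, div_lt_one (exp_pos _)]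
          exact hexp
  obtain ⟨ω, hω⟩ := exists_not_of_prob_lt_one hbad
  simp only [sparse, fewBlocks, tooLarge, fullBlockCount_singleton, pow_one, univ_inter,
    card_univ, not_or, not_exists, not_le] at hω
  exact ⟨toFinset ω, hω.2.2, fun k => ⟨hω.1 k, hω.2.1 k⟩⟩

theorem SimpleGraph.exists_reservoir {V : Type*} [Fintype V] [DecidableEq V] (G : SimpleGraph V)
    {s : ℕ} (hs : s ≠ 0) (L : V → Finset (Fin s → V))
    (hLinj : ∀ v, ∀ q ∈ L v, Function.Injective q)
    (hLdisj : ∀ v, (L v : Set (Fin s → V)).Pairwise fun q q' =>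
      Disjoint (Set.range q) (Set.range q'))
    {p δ d ℓ m : ℝ} (hp0 : 0 ≤ p) (hp1 : p ≤ 1) (hδ0 : 0 ≤ δ) (hδ1 : δ ≤ 1)
    (hdeg : ∀ v, d ≤ (G.neighborSet v).ncard) (hL : ∀ v, ℓ ≤ #(L v))
    (hmd : m ≤ d) (hmℓ : m ≤ ℓ) (hm : m ≤ Fintype.card V)
    (hexp : 2 * Fintype.card V + 1 < exp (δ ^ 2 * p ^ s * m / 4)) :
    ∃ A : Finset V, #A < (1 + δ) * p * Fintype.card V ∧ ∀ v,
      (1 - δ) * p * d < (G.neighborSet v ∩ A).ncard ∧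
      ∃ L' ⊆ L v, (1 - δ) * p ^ s * ℓ < #L' ∧ ∀ q ∈ L', ∀ i, q i ∈ A := by
  classical
  have hdegree : ∀ v, (G.neighborSet v).ncard = #(G.neighborFinset v) := fun v => by
    rw [← Set.ncard_coe_finset, coe_neighborFinset]
  obtain ⟨A, hA, hAv⟩ := exists_finset_meeting_sets_and_blocks hp0 hp1 hδ0 hδ1 hs
    (G.neighborFinset ·) L (fun q => univ.image q)
    (fun v q hq q' hq' hne => by
      rw [Function.onFun, ← disjoint_coe, coe_image, coe_image, coe_univ, Set.image_univ,
        Set.image_univ]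
      exact hLdisj v hq hq' hne)
    (fun v q hq => by rw [card_image_of_injective _ (hLinj v q hq), card_univ, Fintype.card_fin])
    (fun v => hmd.trans (hdegree v ▸ hdeg v)) (fun v => hmℓ.trans (hL v)) hm hexp
  have h1δ : 0 ≤ 1 - δ := sub_nonneg.2 hδ1
  refine ⟨A, hA, fun v => ⟨?_, {q ∈ L v | univ.image q ⊆ A}, filter_subset _ _, ?_,
    fun q hq i => ?_⟩⟩
  · rw [← coe_neighborFinset, ← coe_inter, Set.ncard_coe_finset]
    refine lt_of_le_of_lt ?_ (hAv v).1
    gcongr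
    exact hdegree v ▸ hdeg v
  · refine lt_of_le_of_lt ?_ (hAv v).2
    gcongr
    exact hL v
  · exact image_subset_iff.1 (mem_filter.1 hq).2 i (mem_univ i)

lemma exists_two_mul_add_one_lt_exp {κ : ℝ} (hκ : 0 < κ) :
    ∃ n₀ : ℕ, ∀ n : ℕ, n₀ ≤ n → 2 * (n : ℝ) + 1 < exp (κ * n) := by
  refine ⟨⌈4 / κ ^ 2⌉₊ + 1, fun n hn => ?_⟩
  have hn1 : (1 : ℝ) ≤ n := by exact_mod_cast (by omega : 1 ≤ n)
  have h4 : 4 < κ ^ 2 * n := by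
    rw [← div_lt_iff₀' (by positivity)]
    exact Nat.lt_of_ceil_lt (by omega)
  calc 2 * (n : ℝ) + 1 < 1 + κ * n + (κ * n) ^ 2 / 2 := by nlinarith
    _ ≤ exp (κ * n) := quadratic_le_exp_of_nonneg (by positivity)

/-- The Reservoir Lemma: if `δ(G) ≥ (c+μ)n` and every vertex has at least `ηn`
pairwise vertex-disjoint absorbers, then there is a reservoir `A` with
`2rζn ≤ |A| ≤ γn` such that every vertex has at least `(c + μ/2)|A|` neighbours in `A`
and at least `ζn` pairwise vertex-disjoint absorbers inside `A`. -/
theorem stmt15 (r : ℕ) (hr : 1 ≤ r) (c μ η γ : ℝ)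
    (hc : 0 < c) (hμ : 0 < μ) (hη : 0 < η) (hγ : 0 < γ) (hcμ : c + μ ≤ 1) :
    ∃ ζ : ℝ, 0 < ζ ∧ ∃ n₀ : ℕ, ∀ n : ℕ, n₀ ≤ n → ∀ G : SimpleGraph (Fin n),
      (∀ v : Fin n, (c + μ) * n ≤ ((G.neighborSet v).ncard : ℝ)) →
      (∀ v : Fin n, ∃ L : Finset (Fin (2 * r) → Fin n),
        η * n ≤ (L.card : ℝ) ∧ (∀ p ∈ L, IsAbsorber r G v p) ∧
        (L : Set (Fin (2 * r) → Fin n)).Pairwise fun p q =>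
          Disjoint (Set.range p) (Set.range q)) →
      ∃ A : Finset (Fin n),
        2 * r * ζ * n ≤ (A.card : ℝ) ∧ (A.card : ℝ) ≤ γ * n ∧
        ∀ v : Fin n,
          ((c + μ / 2) * A.card ≤ ((G.neighborSet v ∩ ↑A).ncard : ℝ)) ∧
          ∃ L : Finset (Fin (2 * r) → Fin n),
            ζ * n ≤ (L.card : ℝ) ∧
            (∀ p ∈ L, IsAbsorber r G v p ∧ ∀ i, p i ∈ A) ∧
            (L : Set (Fin (2 * r) → Fin n)).Pairwise fun p q =>
              Disjoint (Set.range p) (Set.range q) := by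
  set δ := μ / 4
  set p := min (γ / 2) (1 / 2)
  set ρ := p ^ (2 * r)
  set β := min (c + μ) η
  have hδ0 : 0 < δ := by positivity
  have h1δ : 0 < 1 - δ := by simp only [δ]; linarith
  have hp0 : 0 < p := lt_min (by positivity) (by norm_num)
  have hp1 : p ≤ 1 := (min_le_right _ _).trans (by norm_num)
  have hρ0 : 0 < ρ := pow_pos hp0 _
  have hβ0 : 0 < β := lt_min (by linarith) hη
  have hr0 : (1 : ℝ) ≤ 2 * r := by norm_cast; omega
  set ζ := (1 - δ) * ρ * β / (2 * r)
  refine ⟨ζ, by positivity, ?_⟩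
  obtain ⟨n₀, hn₀⟩ := exists_two_mul_add_one_lt_exp (κ := δ ^ 2 * ρ * β / 4) (by positivity)
  refine ⟨n₀ + 1, fun n hn G hdeg hL => ?_⟩
  choose L hLcard hLabs hLdisj using hL
  obtain ⟨A, hA, hAv⟩ := G.exists_reservoir (by omega) L (fun v q hq => (hLabs v q hq).1.1)
    hLdisj hp0.le hp1 hδ0.le (by linarith) hdeg hLcard (m := β * n)
    (by gcongr; exact min_le_left _ _) (by gcongr; exact min_le_right _ _)
    (by simpa using mul_le_mul_of_nonneg_right ((min_le_left _ _).trans hcμ) n.cast_nonneg)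
    (by simpa [mul_assoc, mul_div_right_comm] using hn₀ n (by omega))
  have hAn : (#A : ℝ) ≤ (1 + δ) * p * n := by simpa using hA.le
  refine ⟨A, ?_, ?_, fun v => ⟨?_, ?_⟩⟩
  · have hv := (hAv ⟨0, by omega⟩).1
    have hAv₀ : ((G.neighborSet ⟨0, by omega⟩ ∩ ↑A).ncard : ℝ) ≤ #A := by
      exact_mod_cast (Set.ncard_inter_le_ncard_right _ _).trans_eq (Set.ncard_coe_finset A)
    calc 2 * r * ζ * n = (1 - δ) * ρ * (β * n) := by simp only [ζ]; field_simp
      _ ≤ (1 - δ) * p * ((c + μ) * n) := by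
          gcongr
          · exact pow_le_of_le_one hp0.le hp1 (by omega)
          · exact min_le_left _ _
      _ ≤ #A := (hv.trans_le hAv₀).le
  · calc (#A : ℝ) ≤ (1 + δ) * p * n := hAn
      _ ≤ γ * n := by
          gcongr
          nlinarith [min_le_left (γ / 2) (1 / 2)]
  · -- `δ = μ / 4` is small enough for `(c + μ / 2) (1 + δ) ≤ (c + μ) (1 - δ)`, as `c + μ ≤ 1`.
    have hδ : (c + μ / 2) * (1 + δ) ≤ (c + μ) * (1 - δ) := by simp only [δ]; nlinarith
    calc (c + μ / 2) * #A ≤ (c + μ / 2) * (1 + δ) * (p * n) := by nlinarith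
      _ ≤ (c + μ) * (1 - δ) * (p * n) := by gcongr
      _ ≤ (G.neighborSet v ∩ ↑A).ncard := by linarith [(hAv v).1]
  · obtain ⟨L', hL'L, hL'card, hL'A⟩ := (hAv v).2
    refine ⟨L', ?_, fun q hq => ⟨hLabs v q (hL'L hq), hL'A q hq⟩,
      (hLdisj v).mono (coe_subset.2 hL'L)⟩
    calc ζ * n ≤ (1 - δ) * ρ * (β * n) := by
          rw [← mul_assoc]
          gcongr
          exact div_le_self (by positivity) hr0
      _ ≤ (1 - δ) * ρ * (η * n) := by gcongr; exact min_le_right _ _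
      _ ≤ #L' := hL'card.le
end

section
/- Let r ≥ 2, μ > 0, and let G be an n-vertex graph with δ(G) ≥ (1 − 1/r + μ)n, for sufficiently large n relative to r and 1/μ. Suppose V(G) has an equitable regular partition with reduced graph R on k clusters of size m each (with km ≥ (1−ε)n, ε small), and {v_1,...,v_r} is a clique in G, and W ⊆ V(R) with |W| ≤ r. Then there is a clique {V_1,...,V_r} in R − W such that |N_G(v_i,...,v_r) ∩ V_i| ≥ μm for every i ∈ [r]. -/
/-!
Fix `v₀, …, v_{r-1}` and for `t < r` let `N_t` be the common neighbourhood of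
`v_t, …, v_{r-1}`. Each `v_j` misses at most `(1/r - μ)n` vertices, so
`|N_t| ≥ (t/r + (r - t)μ)n`. As the clusters cover all but `εn` vertices, averaging shows that
at least `(t/r + (r - t - 1)μ - ε)k` clusters meet `N_t` in at least `μm` vertices. The common
`R`-neighbourhood of any `t` clusters misses at most `t(1/r - μ/2)k` clusters, so among the
clusters good for `N_t` at least `((r - 1 - t/2)μ - ε)k ≥ μk/4 > r ≥ |W|` are adjacent to all
previously chosen ones; the 1/r terms cancel exactly. Hence the clusters `V_t` can be chosen
greedily for `t = 0, 1, …, r - 1`.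
-/

open Finset Function

theorem Finset.sum_le_card_filter_mul_add {ι : Type*} (s : Finset ι) (f : ι → ℝ) {M θ : ℝ}
    (hfM : ∀ i ∈ s, f i ≤ M) (hθ : 0 ≤ θ) :
    ∑ i ∈ s, f i ≤ #{i ∈ s | θ ≤ f i} * M + #s * θ := by
  classical
  rw [← sum_filter_add_sum_filter_not s (θ ≤ f ·)]
  have hdense : ∑ i ∈ s with θ ≤ f i, f i ≤ #{i ∈ s | θ ≤ f i} * M := by
    simpa using sum_le_card_nsmul _ _ _ fun i hi => hfM i (mem_filter.1 hi).1
  have hsparse : ∑ i ∈ s with ¬θ ≤ f i, f i ≤ #s * θ :=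
    calc ∑ i ∈ s with ¬θ ≤ f i, f i ≤ #{i ∈ s | ¬θ ≤ f i} * θ := by
          simpa using sum_le_card_nsmul {i ∈ s | ¬θ ≤ f i} f θ
            fun i hi => (not_le.1 (mem_filter.1 hi).2).le
      _ ≤ #s * θ := by gcongr; exact filter_subset _ _
  linarith

section Clusters

variable {α κ : Type*} [Fintype κ] {P : κ → Finset α} {m : ℕ}

theorem card_biUnion_univ_of_card_eq [DecidableEq α] (hP : Pairwise (Disjoint on P))
    (hm : ∀ i, #(P i) = m) : #(univ.biUnion P) = Fintype.card κ * m := by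
  rw [card_biUnion (fun i _ j _ hij => hP hij)]
  simp [hm]

theorem card_mul_le_card_of_pairwise_disjoint [Fintype α] (hP : Pairwise (Disjoint on P))
    (hm : ∀ i, #(P i) = m) : Fintype.card κ * m ≤ Fintype.card α := by
  classical
  rw [← card_biUnion_univ_of_card_eq hP hm]
  exact card_le_univ _

theorem card_filter_add_card_mul_le_sum_add [Fintype α] (hP : Pairwise (Disjoint on P))
    (hm : ∀ i, #(P i) = m) (p : α → Prop) [DecidablePred p] :
    #{u | p u} + Fintype.card κ * m ≤ ∑ i, #{u ∈ P i | p u} + Fintype.card α := by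
  classical
  set N : Finset α := {u | p u}
  set U := univ.biUnion P
  have hinter : #(N ∩ U) = ∑ i, #{u ∈ P i | p u} := by
    rw [show N ∩ U = U.filter p by ext; simp [N, and_comm], filter_biUnion,
      card_biUnion fun i _ j _ hij => disjoint_filter_filter (hP hij)]
  have hU : #U = Fintype.card κ * m := card_biUnion_univ_of_card_eq hP hm
  have := card_union_add_card_inter N U
  have := card_le_univ (N ∪ U)
  omega

theorem mul_sub_le_card_filter_dense [Fintype α] (hP : Pairwise (Disjoint on P))
    (hm : ∀ i, #(P i) = m) (hm0 : 0 < m) (p : α → Prop) [DecidablePred p] {a ε μ : ℝ}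
    (hμ : 0 ≤ μ) (hεa : ε ≤ a) (hN : a * Fintype.card α ≤ #{u | p u})
    (hcover : (1 - ε) * Fintype.card α ≤ Fintype.card κ * m) :
    Fintype.card κ * (a - ε - μ) ≤ #{i | μ * m ≤ #{u ∈ P i | p u}} := by
  have hsum : (#{u | p u} : ℝ) + Fintype.card κ * m ≤
      ∑ i, (#{u ∈ P i | p u} : ℝ) + Fintype.card α := by
    exact_mod_cast card_filter_add_card_mul_le_sum_add hP hm p
  have hsplit : ∑ i, (#{u ∈ P i | p u} : ℝ) ≤
      #{i | μ * m ≤ #{u ∈ P i | p u}} * m + Fintype.card κ * (μ * m) :=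
    univ.sum_le_card_filter_mul_add _
      (fun i _ => by exact_mod_cast hm i ▸ card_filter_le _ _) (by positivity)
  have hkn : (Fintype.card κ * m : ℝ) ≤ Fintype.card α := by
    exact_mod_cast card_mul_le_card_of_pairwise_disjoint hP hm
  have hmul : Fintype.card κ * m * (a - ε) ≤ Fintype.card α * (a - ε) :=
    mul_le_mul_of_nonneg_right hkn (by linarith)
  have : Fintype.card κ * (a - ε - μ) * m ≤ #{i | μ * m ≤ #{u ∈ P i | p u}} * m := by
    linarith
  exact le_of_mul_le_mul_right this (by exact_mod_cast hm0)

end Clusters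

namespace SimpleGraph

section Degree

variable {V : Type*} (G : SimpleGraph V)

theorem ncard_neighborSet_eq_degree (v : V) [Fintype (G.neighborSet v)] :
    (G.neighborSet v).ncard = G.degree v := by
  rw [Set.ncard_eq_toFinset_card', ← neighborFinset_def, card_neighborFinset_eq_degree]

variable [Fintype V] [DecidableRel G.Adj]

theorem card_compl_neighborFinset_add_degree [DecidableEq V] (v : V) :
    #(G.neighborFinset v)ᶜ + G.degree v = Fintype.card V := by
  rw [← card_neighborFinset_eq_degree, add_comm, card_add_card_compl]

theorem card_sub_mul_le_card_filter_forall_adj {ι : Type*} (f : ι → V) (s : Finset ι) {δ : ℝ}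
    (hδ : ∀ v, δ ≤ G.degree v) :
    (Fintype.card V : ℝ) - #s * (Fintype.card V - δ) ≤ #{u | ∀ i ∈ s, G.Adj (f i) u} := by
  classical
  set F : Finset V := {u | ∀ i ∈ s, G.Adj (f i) u}
  have hsub : Fᶜ ⊆ s.biUnion fun i => (G.neighborFinset (f i))ᶜ := by
    intro u hu
    simpa [F] using hu
  have hcompl : (#F : ℝ) + #Fᶜ = Fintype.card V := by exact_mod_cast card_add_card_compl F
  have hnon : ∀ i ∈ s, (#(G.neighborFinset (f i))ᶜ : ℝ) ≤ Fintype.card V - δ := by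
    intro i _
    have hsum : (#(G.neighborFinset (f i))ᶜ : ℝ) + G.degree (f i) = Fintype.card V := by
      exact_mod_cast G.card_compl_neighborFinset_add_degree (f i)
    linarith [hδ (f i)]
  have : (#Fᶜ : ℝ) ≤ #s * (Fintype.card V - δ) :=
    calc (#Fᶜ : ℝ) ≤ ∑ i ∈ s, (#(G.neighborFinset (f i))ᶜ : ℝ) := by
          exact_mod_cast (card_le_card hsub).trans card_biUnion_le
      _ ≤ #s * (Fintype.card V - δ) := by
          simpa using sum_le_card_nsmul s _ _ hnon
  linarith

end Degree

section Greedy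

variable {κ : Type*} (R : SimpleGraph κ) [DecidableRel R.Adj]

theorem exists_seq_adj_of_card_lt [Nonempty κ] (W : Finset κ) (A : ℕ → Finset κ) (r : ℕ)
    (hA : ∀ t < r, ∀ c : ℕ → κ, #W < #{x ∈ A t | ∀ j < t, R.Adj (c j) x}) :
    ∃ c : ℕ → κ, ∀ i < r, c i ∈ A i ∧ c i ∉ W ∧ ∀ j < i, R.Adj (c j) (c i) := by
  induction r with
  | zero => exact ⟨fun _ => Classical.arbitrary κ, by simp⟩
  | succ r ih =>
    obtain ⟨c, hc⟩ := ih fun t ht => hA t (by omega)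
    obtain ⟨x, hxA, hxW⟩ := exists_mem_notMem_of_card_lt_card (hA r (by omega) c)
    rw [mem_filter] at hxA
    have hold : ∀ j < r, update c r x j = c j := fun j hj => update_of_ne hj.ne _ _
    refine ⟨update c r x, fun i hi => ?_⟩
    rcases Nat.lt_succ_iff_lt_or_eq.1 hi with hi | rfl
    · obtain ⟨hiA, hiW, hiadj⟩ := hc i hi
      rw [hold i hi]
      exact ⟨hiA, hiW, fun j hj => hold j (hj.trans hi) ▸ hiadj j hj⟩
    · rw [update_self]
      exact ⟨hxA.1, hxW, fun j hj => hold j hj ▸ hxA.2 j hj⟩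

theorem exists_clique_of_card_lt [Nonempty κ] (W : Finset κ) (A : ℕ → Finset κ) (r : ℕ)
    (hA : ∀ t < r, ∀ c : ℕ → κ, #W < #{x ∈ A t | ∀ j < t, R.Adj (c j) x}) :
    ∃ c : Fin r → κ, Injective c ∧ (∀ i, c i ∉ W) ∧ (∀ i j, i ≠ j → R.Adj (c i) (c j)) ∧
      ∀ i : Fin r, c i ∈ A i := by
  obtain ⟨c, hc⟩ := R.exists_seq_adj_of_card_lt W A r hA
  have hadj : ∀ i j : Fin r, i ≠ j → R.Adj (c i) (c j) := by
    intro i j hij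
    rcases lt_or_gt_of_ne hij with h | h
    · exact (hc j j.2).2.2 i h
    · exact ((hc i i.2).2.2 j h).symm
  refine ⟨fun i => c i, fun i j hij => ?_, fun i => (hc i i.2).2.1, hadj,
    fun i => (hc i i.2).1⟩
  by_contra hne
  exact R.ne_of_adj (hadj i j hne) hij

end Greedy

end SimpleGraph

theorem card_lt_card_filter_dense_forall_adj {r n k m : ℕ} {μ ε : ℝ} (hr : 2 ≤ r) (hμ : 0 < μ)
    (hε : ε ≤ μ / 4) (hk : 4 * r / μ < k) (G : SimpleGraph (Fin n)) [DecidableRel G.Adj]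
    (R : SimpleGraph (Fin k)) [DecidableRel R.Adj] {P : Fin k → Finset (Fin n)}
    (hP : Pairwise (Disjoint on P)) (hm : ∀ i, #(P i) = m) (hm0 : 0 < m)
    (hcover : (1 - ε) * n ≤ k * m) (hG : ∀ u, (1 - 1 / r + μ) * n ≤ G.degree u)
    (hR : ∀ x, (1 - 1 / r + μ / 2) * k ≤ R.degree x) (v : Fin r → Fin n) (W : Finset (Fin k))
    (hW : #W ≤ r) {t : ℕ} (ht : t < r) (c : ℕ → Fin k) :
    #W < #{x ∈ {x | μ * m ≤ #{u ∈ P x | ∀ j : Fin r, t ≤ j → G.Adj (v j) u}} |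
      ∀ j < t, R.Adj (c j) x} := by
  classical
  set A : Finset (Fin k) := {x | μ * m ≤ #{u ∈ P x | ∀ j : Fin r, t ≤ j → G.Adj (v j) u}}
  set C : Finset (Fin k) := {x | ∀ j < t, R.Adj (c j) x}
  have hr' : (2 : ℝ) ≤ r := by exact_mod_cast hr
  have htr : (t : ℝ) + 1 ≤ r := by exact_mod_cast ht
  have hN : (t / r + (r - t) * μ) * n ≤ #{u | ∀ j : Fin r, t ≤ j → G.Adj (v j) u} := by
    have h := G.card_sub_mul_le_card_filter_forall_adj v (Ici ⟨t, ht⟩) hG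
    rw [Fin.card_Ici, Nat.cast_sub ht.le, Fintype.card_fin] at h
    convert h using 3
    · field_simp; ring
    · ext u; simp [Fin.le_def]
  have hA : k * (t / r + (r - t) * μ - ε - μ) ≤ #A := by
    have hεa : ε ≤ t / r + (r - t) * μ := by
      have : 0 ≤ (t : ℝ) / r := by positivity
      nlinarith
    simpa using mul_sub_le_card_filter_dense hP hm hm0 _ hμ.le hεa (by simpa using hN)
      (by simpa using hcover)
  have hC : k - t * (k - (1 - 1 / r + μ / 2) * k) ≤ #C := by
    simpa [C] using R.card_sub_mul_le_card_filter_forall_adj c (range t) hR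
  have hAC : (#A : ℝ) + #C ≤ #{x ∈ A | ∀ j < t, R.Adj (c j) x} + k := by
    have hinter : A ∩ C = {x ∈ A | ∀ j < t, R.Adj (c j) x} := by ext; simp [C]
    have hunion := card_union_add_card_inter A C
    have huniv := card_le_univ (A ∪ C)
    rw [hinter] at hunion
    rw [Fintype.card_fin] at huniv
    exact_mod_cast (by omega)
  have hcoef : k * (μ / 4) ≤ k * ((r - 1 - t / 2) * μ - ε) := by
    have : 1 / 2 ≤ (r : ℝ) - 1 - t / 2 := by linarith
    gcongr
    nlinarith
  have hkμ : r < k * (μ / 4) := by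
    rw [div_lt_iff₀ hμ] at hk; linarith
  have hW' : (#W : ℝ) ≤ r := by exact_mod_cast hW
  have hcancel :
      k * (t / r + (r - t) * μ - ε - μ) + (k - t * (k - (1 - 1 / r + μ / 2) * k)) - k =
        k * ((r - 1 - t / 2) * μ - ε) := by
    ring
  exact_mod_cast (by linarith : (#W : ℝ) < #{x ∈ A | ∀ j < t, R.Adj (c j) x})

/-- Claim 6.3: given a graph `G` with `δ(G) ≥ (1 - 1/r + μ)n`, an equitable cluster
partition `P : Fin k → Finset (Fin n)` with clusters of size `m` and `km ≥ (1-ε)n`,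
and a reduced graph `R` on the clusters with `δ(R) ≥ (1 - 1/r + μ/2)k`, for every
clique `v₁,...,v_r` in `G` and every `W ⊆ V(R)` with `|W| ≤ r` there is a clique
`V₁,...,V_r` in `R - W` with `|N_G(v_i,...,v_r) ∩ V_i| ≥ μm` for every `i`. -/
theorem stmt17 (r : ℕ) (hr : 2 ≤ r) (μ : ℝ) (hμ : 0 < μ) :
    ∃ k₀ : ℕ, ∃ ε₀ : ℝ, 0 < ε₀ ∧ ∀ k : ℕ, k₀ ≤ k → ∀ ε : ℝ, 0 < ε → ε ≤ ε₀ →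
      ∀ n m : ℕ, ∀ G : SimpleGraph (Fin n), ∀ P : Fin k → Finset (Fin n),
        (∀ i j, i ≠ j → Disjoint (P i) (P j)) →
        (∀ i, (P i).card = m) →
        (1 - ε) * n ≤ ((k * m : ℕ) : ℝ) →
        (∀ v : Fin n, (1 - 1 / (r : ℝ) + μ) * n ≤ ((G.neighborSet v).ncard : ℝ)) →
        ∀ R : SimpleGraph (Fin k),
          (∀ i : Fin k, (1 - 1 / (r : ℝ) + μ / 2) * k ≤ ((R.neighborSet i).ncard : ℝ)) →
          ∀ v : Fin r → Fin n, Function.Injective v →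
            (∀ i j, i ≠ j → G.Adj (v i) (v j)) →
            ∀ W : Finset (Fin k), W.card ≤ r →
              ∃ c : Fin r → Fin k, Function.Injective c ∧ (∀ i, c i ∉ W) ∧
                (∀ i j, i ≠ j → R.Adj (c i) (c j)) ∧
                ∀ i : Fin r, μ * m ≤
                  (({u ∈ (P (c i) : Set (Fin n)) |
                      ∀ j : Fin r, i ≤ j → G.Adj (v j) u}).ncard : ℝ) := by
  classical
  refine ⟨⌊4 * r / μ⌋₊ + 1, min (μ / 4) (1 / 2), by positivity, ?_⟩
  intro k hk ε _ hε₀ n m G P hP hPm hkm hδG R hδR v _ _ W hW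
  have hk' : 4 * r / μ < k := (Nat.lt_floor_add_one _).trans_le (by exact_mod_cast hk)
  have : Nonempty (Fin k) := ⟨⟨0, by omega⟩⟩
  have hkm' : (1 - ε) * n ≤ k * m := by exact_mod_cast hkm
  have hm0 : 0 < m := by
    have hn : (0 : ℝ) < n := by exact_mod_cast (v ⟨0, by omega⟩).pos
    have : (0 : ℝ) < m := by
      by_contra! h
      nlinarith [min_le_right (μ / 4) (1 / 2 : ℝ)]
    exact_mod_cast this
  have hG (u) : (1 - 1 / r + μ) * n ≤ G.degree u := by
    simpa [G.ncard_neighborSet_eq_degree] using hδG u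
  have hR (x) : (1 - 1 / r + μ / 2) * k ≤ R.degree x := by
    simpa [R.ncard_neighborSet_eq_degree] using hδR x
  obtain ⟨c, hc, hcW, hcR, hcA⟩ := R.exists_clique_of_card_lt W _ r fun t ht c =>
    card_lt_card_filter_dense_forall_adj hr hμ (hε₀.trans (min_le_left _ _)) hk' G R hP hPm hm0
      hkm' hG hR v W hW ht c
  refine ⟨c, hc, hcW, hcR, fun i => ?_⟩
  have hset : {u ∈ (P (c i) : Set (Fin n)) | ∀ j : Fin r, i ≤ j → G.Adj (v j) u} =
      ↑({u ∈ P (c i) | ∀ j : Fin r, i ≤ j → G.Adj (v j) u}) := by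
    ext; simp
  rw [hset, Set.ncard_coe_finset]
  simpa using hcA i
end
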